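/- arXiv:2106.11626 — 13 statements merged into one kernel-verified Lean document; each statement's English description precedes it below -/
import Mathlib

section
/- Let P ⊆ ℝ³ be a convex polyhedron with 0 in its interior and let q ∈ ∂P be a regular point, i.e. there exists x ∈ P with ⟪x, q⟫ > ‖q‖². Then there is a unique boundary-tangent direction v₀ of P at q of steepest ascent: ⟪q, v₀⟫ > 0, and every boundary-tangent direction v of P at q with v ≠ v₀ satisfies ⟪q, v⟫ < ⟪q, v₀⟫. (This is the regular-point part of the paper's theorem on existence and uniqueness of the extended gradient of the radial distance function.) -/
/-!
Near `q`, the polytope `P = conv S` coincides with `q + C`, where `C` is the closed cone generated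
by `S - q`: by the conic Carathéodory theorem a small vector of `C` is a nonnegative combination of
linearly independent generators, whose coefficients are then small, so it lies in `P - q`. Hence
unit vectors of `∂C` are boundary-tangent directions at `q`, and every boundary-tangent direction
lies in `C`.

Let `p` be the projection of `q` onto `C`. Then `q - p` is orthogonal to `p` and nonpositive on
`C`, so `⟪q, v⟫ ≤ ⟪p, v⟫ ≤ ‖p‖` for unit `v ∈ C`, with equality only at `v₀ = p / ‖p‖`
(Cauchy–Schwarz). Regularity of `q` gives `p ≠ 0`. Since `0 ∈ P` we have `-q ∈ C`, and `q ∈ ∂P`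
forces `0 ∉ int C`; hence `q ∉ int C`. This puts `v₀` on `∂C`: if `v₀` were interior, the
functional `⟪q - p, ·⟫`, nonpositive on `C` and zero at `v₀`, would vanish, making `q = ‖p‖ v₀`.
-/

open scoped RealInnerProductSpace Pointwise

open Set Filter Topology

namespace PointedCone

section Caratheodory

variable {𝕜 E : Type*} [Field 𝕜] [LinearOrder 𝕜] [IsStrictOrderedRing 𝕜] [AddCommGroup E]
  [Module 𝕜 E] {s : Finset E} {x : E}

theorem mem_hull_finset_iff :
    x ∈ hull 𝕜 (s : Set E) ↔ ∃ c : E → 𝕜, (∀ i ∈ s, 0 ≤ c i) ∧ ∑ i ∈ s, c i • i = x := by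
  rw [hull, Submodule.mem_span_finset]
  constructor
  · rintro ⟨f, -, rfl⟩
    exact ⟨fun i => f i, fun i _ => (f i).2, rfl⟩
  · rintro ⟨c, hc, rfl⟩
    classical
    refine ⟨fun i => if hi : i ∈ s then ⟨c i, hc i hi⟩ else 0, fun i hi => ?_, ?_⟩
    · by_contra h
      exact hi (dif_neg h)
    · exact Finset.sum_congr rfl fun i hi => by simp [hi, Nonneg.mk_smul]

theorem exists_mem_hull_erase [DecidableEq E] (hs : ¬LinearIndepOn 𝕜 id (s : Set E))
    (hx : x ∈ hull 𝕜 (s : Set E)) : ∃ y ∈ s, x ∈ hull 𝕜 (s.erase y : Set E) := by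
  obtain ⟨c, hc, rfl⟩ := mem_hull_finset_iff.1 hx
  obtain ⟨f, hf, hfpos⟩ : ∃ f : E → 𝕜, ∑ i ∈ s, f i • i = 0 ∧ ∃ i ∈ s, 0 < f i := by
    obtain ⟨f, hf, i, hi, hfi⟩ := not_linearIndepOn_finset_iff.1 hs
    rcases hfi.lt_or_gt with h | h
    · exact ⟨-f, by simpa [neg_smul] using hf, i, hi, by simpa using h⟩
    · exact ⟨f, hf, i, hi, h⟩
  -- Subtract the largest multiple of the relation `f` keeping all coefficients nonnegative.
  obtain ⟨y, hy, hmin⟩ := (s.filter (0 < f ·)).exists_min_image (fun i => c i / f i)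
    (by simpa [Finset.Nonempty] using hfpos)
  rw [Finset.mem_filter] at hy
  set r := c y / f y
  have hr : 0 ≤ r := div_nonneg (hc y hy.1) hy.2.le
  have hry : r * f y = c y := div_mul_cancel₀ _ hy.2.ne'
  refine ⟨y, hy.1, mem_hull_finset_iff.2 ⟨fun i => c i - r * f i, fun i hi => ?_, ?_⟩⟩
  · have hi := Finset.mem_of_mem_erase hi
    rcases lt_or_ge 0 (f i) with hfi | hfi
    · have := hmin i (Finset.mem_filter.2 ⟨hi, hfi⟩)
      rw [le_div_iff₀ hfi] at this
      linarith
    · linarith [mul_nonpos_of_nonneg_of_nonpos hr hfi, hc i hi]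
  · rw [Finset.sum_erase _ (by simp [hry])]
    simp [sub_smul, Finset.sum_sub_distrib, mul_smul, ← Finset.smul_sum, hf]

theorem exists_linearIndepOn_of_mem_hull (hx : x ∈ hull 𝕜 (s : Set E)) :
    ∃ t ⊆ s, LinearIndepOn 𝕜 id (t : Set E) ∧ x ∈ hull 𝕜 (t : Set E) := by
  classical
  induction s using Finset.strongInduction with
  | H s ih =>
    by_cases hs : LinearIndepOn 𝕜 id (s : Set E)
    · exact ⟨s, subset_rfl, hs, hx⟩
    obtain ⟨y, hy, hxy⟩ := exists_mem_hull_erase hs hx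
    obtain ⟨t, hts, ht, hxt⟩ := ih _ (Finset.erase_ssubset hy) hxy
    exact ⟨t, hts.trans (Finset.erase_subset _ _), ht, hxt⟩

end Caratheodory

end PointedCone

theorem LinearIndependent.eventually_sum_le_one {ι E : Type*} [Fintype ι] [NormedAddCommGroup E]
    [NormedSpace ℝ E] {v : ι → E} (hv : LinearIndependent ℝ v) :
    ∀ᶠ x in 𝓝 (0 : E), ∀ c : ι → ℝ, ∑ i, c i • v i = x → ∑ i, c i ≤ 1 := by
  have hind : IsInducing (Fintype.linearCombination ℝ v) :=
    (LinearMap.isClosedEmbedding_of_injective (LinearMap.ker_eq_bot.2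
      hv.fintypeLinearCombination_injective)).isInducing
  have hsum : ∀ᶠ c in 𝓝 (0 : ι → ℝ), ∑ i, c i < 1 := by
    have : Continuous fun c : ι → ℝ => ∑ i, c i := by fun_prop
    exact this.tendsto' 0 0 (by simp) |>.eventually_lt_const one_pos
  rw [hind.nhds_eq_comap, map_zero] at hsum
  obtain ⟨U, hU, hUsub⟩ := hsum
  filter_upwards [hU] with x hx c hc
  exact (hUsub (by simpa [Fintype.linearCombination_apply, hc] using hx)).le

theorem Convex.sum_smul_mem_of_sum_le_one {𝕜 E ι : Type*} [Field 𝕜] [LinearOrder 𝕜]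
    [IsStrictOrderedRing 𝕜] [AddCommGroup E] [Module 𝕜 E] {Q : Set E} (hQ : Convex 𝕜 Q)
    (h0 : 0 ∈ Q) {t : Finset ι} {c : ι → 𝕜} {z : ι → E} (hc : ∀ i ∈ t, 0 ≤ c i)
    (hc1 : ∑ i ∈ t, c i ≤ 1) (hz : ∀ i ∈ t, z i ∈ Q) : ∑ i ∈ t, c i • z i ∈ Q := by
  rcases (Finset.sum_nonneg hc).eq_or_lt with ha | ha
  · rw [Finset.sum_eq_zero fun i hi => by
      rw [(Finset.sum_eq_zero_iff_of_nonneg hc).1 ha.symm i hi, zero_smul]]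
    exact h0
  · have h := hQ.smul_mem_of_zero_mem h0 (hQ.centerMass_mem hc ha hz) ⟨ha.le, hc1⟩
    rwa [Finset.centerMass, smul_inv_smul₀ ha.ne'] at h

theorem Convex.eventually_mem_of_mem_hull {E : Type*} [NormedAddCommGroup E] [NormedSpace ℝ E]
    {Q : Set E} (hQ : Convex ℝ Q) (h0 : 0 ∈ Q) {s : Set E} (hs : s.Finite) (hsQ : s ⊆ Q) :
    ∀ᶠ x in 𝓝 (0 : E), x ∈ PointedCone.hull ℝ s → x ∈ Q := by
  classical
  lift s to Finset E using hs
  have hindep : ∀ t ∈ s.powerset, ∀ᶠ x in 𝓝 (0 : E),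
      LinearIndepOn ℝ id (t : Set E) → x ∈ PointedCone.hull ℝ (t : Set E) → x ∈ Q := by
    intro t ht
    by_cases hti : LinearIndepOn ℝ id (t : Set E)
    · filter_upwards [LinearIndependent.eventually_sum_le_one hti] with x hx _ hxt
      obtain ⟨c, hc, rfl⟩ := PointedCone.mem_hull_finset_iff.1 hxt
      refine hQ.sum_smul_mem_of_sum_le_one h0 hc ?_ fun i hi => hsQ (Finset.mem_powerset.1 ht hi)
      have := hx (fun i => c i) (Finset.sum_coe_sort t fun i => c i • i)
      exact (Finset.sum_coe_sort t c).symm.trans_le this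
    · exact .of_forall fun _ h => absurd h hti
  filter_upwards [(Filter.eventually_all_finset _).2 hindep] with x hx hxs
  obtain ⟨t, hts, hti, hxt⟩ := PointedCone.exists_linearIndepOn_of_mem_hull hxs
  exact hx t (Finset.mem_powerset.2 hts) hti hxt

theorem Filter.Eventually.imp_mem_of_mem_closure {X : Type*} [TopologicalSpace X] {a : X}
    {s t : Set X} (h : ∀ᶠ x in 𝓝 a, x ∈ s → x ∈ t) (ht : IsClosed t) :
    ∀ᶠ x in 𝓝 a, x ∈ closure s → x ∈ t := by
  filter_upwards [h.eventually_nhds] with x hx hxs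
  exact ht.closure_subset <| mem_closure_iff_frequently.2 <|
    (mem_closure_iff_frequently.1 hxs).mp hx

namespace PointedCone

variable {E : Type*} [NormedAddCommGroup E] [NormedSpace ℝ E] {C : PointedCone ℝ E} {c : ℝ} {x : E}

theorem smul_coe_eq (hc : 0 < c) : c • (C : Set E) = C := by
  ext y
  rw [mem_smul_set_iff_inv_smul_mem₀ hc.ne', SetLike.mem_coe, SetLike.mem_coe,
    C.smul_mem_iff (inv_pos.2 hc)]

theorem smul_mem_interior (hc : 0 < c) (hx : x ∈ interior (C : Set E)) :
    c • x ∈ interior (C : Set E) := by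
  rw [← smul_coe_eq (C := C) hc, interior_smul₀ hc.ne']
  exact smul_mem_smul_set hx

theorem smul_mem_frontier (hc : 0 < c) (hx : x ∈ frontier (C : Set E)) :
    c • x ∈ frontier (C : Set E) := by
  have h : frontier (c • (C : Set E)) = c • frontier (C : Set E) :=
    ((Homeomorph.smulOfNeZero c hc.ne').image_frontier _).symm
  rw [← smul_coe_eq (C := C) hc, h]
  exact smul_mem_smul_set hx

theorem zero_mem_interior_of_neg_mem (hx : x ∈ interior (C : Set E)) (hnx : -x ∈ C) :
    (0 : E) ∈ interior (C : Set E) := by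
  refine interior_maximal (t := (· + x) ⁻¹' interior (C : Set E)) (fun w hw => ?_)
    (isOpen_interior.preimage (by fun_prop)) (by simpa using hx)
  simpa using C.add_mem (interior_subset hw) hnx

structure IsLocalModelAt (C : PointedCone ℝ E) (P : Set E) (q : E) : Prop where
  sub_mem : ∀ x ∈ P, x - q ∈ C
  eventually_add_mem : ∀ᶠ v in 𝓝 (0 : E), v ∈ C → q + v ∈ P

namespace IsLocalModelAt

variable {P : Set E} {q v : E} (hCP : C.IsLocalModelAt P q)
include hCP

theorem mem_interior_of_add_mem_interior (hv : q + v ∈ interior P) : v ∈ interior (C : Set E) :=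
  interior_maximal (t := (q + ·) ⁻¹' interior P)
    (fun w hw => by simpa using hCP.sub_mem _ (interior_subset hw))
    (isOpen_interior.preimage (by fun_prop)) hv

theorem zero_notMem_interior (hq : q ∉ interior P) : (0 : E) ∉ interior (C : Set E) := by
  intro h0
  refine hq (mem_interior_iff_mem_nhds.2 ?_)
  rw [← map_add_left_nhds_zero, Filter.mem_map]
  exact (hCP.eventually_add_mem.and (isOpen_interior.mem_nhds h0)).mono fun v hv =>
    hv.1 (interior_subset hv.2)

theorem eventually_add_mem_frontier (hC : IsClosed (C : Set E)) :
    ∀ᶠ v in 𝓝 (0 : E), v ∈ frontier (C : Set E) → q + v ∈ frontier P := by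
  filter_upwards [hCP.eventually_add_mem] with v hv hvC
  exact ⟨subset_closure (hv (hC.frontier_subset hvC)),
    fun h => hvC.2 (hCP.mem_interior_of_add_mem_interior h)⟩

theorem exists_add_smul_mem_frontier (hC : IsClosed (C : Set E)) (hq : q ∈ frontier P)
    (hv : v ∈ frontier (C : Set E)) : ∃ ε > 0, ∀ t ∈ Icc (0 : ℝ) ε, q + t • v ∈ frontier P := by
  have hev : ∀ᶠ t : ℝ in 𝓝 0, t • v ∈ frontier (C : Set E) → q + t • v ∈ frontier P :=
    (continuous_id.smul continuous_const).tendsto' 0 0 (zero_smul ℝ v)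
      |>.eventually (hCP.eventually_add_mem_frontier hC)
  obtain ⟨ε, hε, hεt⟩ := Metric.eventually_nhds_iff.1 hev
  refine ⟨ε / 2, half_pos hε, fun t ht => ?_⟩
  rcases ht.1.eq_or_lt with rfl | ht0
  · simpa using hq
  · refine hεt ?_ (smul_mem_frontier ht0 hv)
    rw [Real.dist_eq, sub_zero, abs_of_pos ht0]
    linarith [ht.2]

theorem mem_of_add_smul_mem_frontier (hP : IsClosed P)
    (h : ∃ ε > 0, ∀ t ∈ Icc (0 : ℝ) ε, q + t • v ∈ frontier P) : v ∈ C := by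
  obtain ⟨ε, hε, hεt⟩ := h
  have := hCP.sub_mem _ (hP.frontier_subset (hεt ε ⟨hε.le, le_rfl⟩))
  rwa [add_sub_cancel_left, C.smul_mem_iff hε] at this

end IsLocalModelAt

end PointedCone

theorem Set.Finite.exists_isLocalModelAt_convexHull {E : Type*} [NormedAddCommGroup E]
    [NormedSpace ℝ E] {S : Set E} (hS : S.Finite) {q : E} (hq : q ∈ convexHull ℝ S) :
    ∃ C : PointedCone ℝ E, IsClosed (C : Set E) ∧ C.IsLocalModelAt (convexHull ℝ S) q := by
  set K := PointedCone.hull ℝ ((· - q) '' S)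
  refine ⟨K.closure, by simp [isClosed_closure], ⟨fun x hx => ?_, ?_⟩⟩
  · have hconv : Convex ℝ ((· - q) ⁻¹' (K : Set E)) := by
      simpa only [sub_eq_add_neg] using K.convex.translate_preimage_left (-q)
    have hSK : S ⊆ (· - q) ⁻¹' (K : Set E) := fun x hx =>
      PointedCone.subset_hull (R := ℝ) (mem_image_of_mem (· - q) hx)
    have hxK : x - q ∈ K := convexHull_min hSK hconv hx
    rw [← SetLike.mem_coe, PointedCone.coe_closure]
    exact subset_closure hxK
  · have hQ := (convex_convexHull ℝ S).translate_preimage_right q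
    have hK := hQ.eventually_mem_of_mem_hull (by simpa using hq) (hS.image (· - q))
      (by rintro _ ⟨x, hx, rfl⟩; simpa using subset_convexHull ℝ S hx)
    simp only [← SetLike.mem_coe, PointedCone.coe_closure]
    exact hK.imp_mem_of_mem_closure ((hS.isClosed_convexHull ℝ).preimage (by fun_prop))

namespace PointedCone

section InnerProduct

variable {E : Type*} [NormedAddCommGroup E] [InnerProductSpace ℝ E] {C : PointedCone ℝ E}

theorem eq_zero_of_inner_nonpos_of_mem_interior {n v : E} (hn : ∀ w ∈ C, ⟪n, w⟫ ≤ 0)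
    (hv : v ∈ interior (C : Set E)) (hnv : ⟪n, v⟫ = 0) : n = 0 := by
  have hev : ∀ᶠ s : ℝ in 𝓝 0, v + s • n ∈ C := by
    have hcont : Continuous fun s : ℝ => v + s • n := by fun_prop
    refine (hcont.continuousAt.eventually_mem ?_).mono fun s hs => interior_subset hs
    simpa using isOpen_interior.mem_nhds hv
  obtain ⟨s, hsC, hs⟩ := ((hev.filter_mono nhdsWithin_le_nhds).and self_mem_nhdsWithin).exists
    (f := 𝓝[>] (0 : ℝ))
  have h := hn _ hsC
  rw [inner_add_right, hnv, zero_add, inner_smul_right, real_inner_self_eq_norm_sq] at h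
  have hn2 : ‖n‖ ^ 2 ≤ 0 := by
    by_contra hn2
    linarith [mul_pos (mem_Ioi.1 hs) (not_le.1 hn2)]
  simpa using hn2

/-- Moreau decomposition `q = p + (q - p)` along a closed convex cone and its polar. -/
theorem exists_inner_sub_eq_zero_and_le_zero [CompleteSpace E] (hC : IsClosed (C : Set E)) (q : E) :
    ∃ p ∈ C, ⟪q - p, p⟫ = 0 ∧ ∀ w ∈ C, ⟪q - p, w⟫ ≤ 0 := by
  obtain ⟨p, hpC, hp⟩ := exists_norm_eq_iInf_of_complete_convex ⟨0, C.zero_mem⟩ hC.isComplete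
    C.convex q
  have hvar := (norm_eq_iInf_iff_real_inner_le_zero C.convex hpC).1 hp
  have hle : ∀ w ∈ C, ⟪q - p, w⟫ ≤ 0 := fun w hw => by
    simpa using hvar (w + p) (C.add_mem hw hpC)
  refine ⟨p, hpC, le_antisymm (hle p hpC) ?_, hle⟩
  simpa [inner_neg_right] using hvar 0 C.zero_mem

theorem exists_unit_mem_frontier_inner_lt [CompleteSpace E] (hC : IsClosed (C : Set E)) {q : E}
    (hq : q ∉ interior (C : Set E)) {u : E} (hu : u ∈ C) (hqu : 0 < ⟪q, u⟫) :
    ∃ v₀ ∈ frontier (C : Set E), ‖v₀‖ = 1 ∧ 0 < ⟪q, v₀⟫ ∧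
      ∀ v ∈ C, ‖v‖ = 1 → v ≠ v₀ → ⟪q, v⟫ < ⟪q, v₀⟫ := by
  obtain ⟨p, hpC, hnp, hnC⟩ := exists_inner_sub_eq_zero_and_le_zero hC q
  set n := q - p with hn
  have hq_eq : q = p + n := by rw [hn, add_sub_cancel]
  have hinner : ∀ w, ⟪q, w⟫ = ⟪p, w⟫ + ⟪n, w⟫ := fun w => by rw [hq_eq, inner_add_left]
  have hp : p ≠ 0 := by
    rintro rfl
    have := hnC u hu
    rw [hinner, inner_zero_left, zero_add] at hqu
    linarith
  have hpn : 0 < ‖p‖ := norm_pos_iff.2 hp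
  set v₀ := ‖p‖⁻¹ • p with hv₀
  have hv₀C : v₀ ∈ C := C.smul_mem (inv_nonneg.2 hpn.le) hpC
  have hv₀n : ⟪n, v₀⟫ = 0 := by rw [hv₀, inner_smul_right, hnp, mul_zero]
  have hv₀norm : ‖v₀‖ = 1 := by rw [hv₀, norm_smul, norm_inv, norm_norm, inv_mul_cancel₀ hpn.ne']
  have hqv₀ : ⟪q, v₀⟫ = ‖p‖ := by
    rw [hinner, hv₀n, add_zero, hv₀, inner_smul_right, real_inner_self_eq_norm_sq]
    field_simp
  refine ⟨v₀, ⟨subset_closure hv₀C, fun hint => hq ?_⟩, hv₀norm, hqv₀ ▸ hpn, ?_⟩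
  · have hqp : q = ‖p‖ • v₀ := by
      rw [hq_eq, eq_zero_of_inner_nonpos_of_mem_interior hnC hint hv₀n, add_zero, hv₀,
        smul_inv_smul₀ hpn.ne']
    rw [hqp]
    exact smul_mem_interior hpn hint
  · intro v hvC hv hne
    calc ⟪q, v⟫ ≤ ⟪p, v⟫ := by rw [hinner]; linarith [hnC v hvC]
      _ = ‖p‖ * ⟪v₀, v⟫ := by
        rw [hv₀, real_inner_smul_left, mul_inv_cancel_left₀ hpn.ne']
      _ < ‖p‖ * 1 := by
        gcongr
        exact (inner_lt_one_iff_real_of_norm_eq_one hv₀norm hv).2 hne.symm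
      _ = ⟪q, v₀⟫ := by rw [mul_one, hqv₀]

end InnerProduct

end PointedCone

/-- at a regular boundary point `q` of a convex polyhedron `P` (with `0` in
its interior), there is a unique boundary-tangent direction of steepest ascent of the
radial distance function: `⟪q, v₀⟫ > 0` and every other boundary-tangent direction `v`
satisfies `⟪q, v⟫ < ⟪q, v₀⟫`. -/
theorem unique_steepest_ascent_direction_at_regular_point
    (S : Set (EuclideanSpace ℝ (Fin 3))) (hSfin : S.Finite)
    (P : Set (EuclideanSpace ℝ (Fin 3))) (hP : P = convexHull ℝ S)
    (h0 : (0 : EuclideanSpace ℝ (Fin 3)) ∈ interior P)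
    (q : EuclideanSpace ℝ (Fin 3)) (hq : q ∈ frontier P)
    (hreg : ∃ x ∈ P, ‖q‖ ^ 2 < ⟪x, q⟫) :
    ∃! v₀ : EuclideanSpace ℝ (Fin 3),
      (‖v₀‖ = 1 ∧ ∃ ε > (0 : ℝ), ∀ t ∈ Set.Icc (0 : ℝ) ε, q + t • v₀ ∈ frontier P) ∧
      0 < ⟪q, v₀⟫ ∧
      ∀ v : EuclideanSpace ℝ (Fin 3),
        (‖v‖ = 1 ∧ ∃ ε > (0 : ℝ), ∀ t ∈ Set.Icc (0 : ℝ) ε, q + t • v ∈ frontier P) →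
        v ≠ v₀ → ⟪q, v⟫ < ⟪q, v₀⟫ := by
  subst hP
  have hPcl : IsClosed (convexHull ℝ S) := hSfin.isClosed_convexHull ℝ
  obtain ⟨C, hC, hmodel⟩ := hSfin.exists_isLocalModelAt_convexHull (hPcl.frontier_subset hq)
  have hqC : q ∉ interior (C : Set (EuclideanSpace ℝ (Fin 3))) := fun h =>
    hmodel.zero_notMem_interior hq.2 <|
      C.zero_mem_interior_of_neg_mem h (by simpa using hmodel.sub_mem 0 (interior_subset h0))
  obtain ⟨x, hxP, hxq⟩ := hreg
  have hqx : 0 < ⟪q, x - q⟫ := by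
    rw [inner_sub_right, real_inner_self_eq_norm_sq, real_inner_comm]
    linarith
  obtain ⟨v₀, hv₀C, hv₀, hqv₀, hmax⟩ :=
    C.exists_unit_mem_frontier_inner_lt hC hqC (hmodel.sub_mem x hxP) hqx
  have htangent := hmodel.exists_add_smul_mem_frontier hC hq hv₀C
  have hsteepest : ∀ v : EuclideanSpace ℝ (Fin 3),
      (‖v‖ = 1 ∧ ∃ ε > (0 : ℝ), ∀ t ∈ Set.Icc (0 : ℝ) ε, q + t • v ∈ frontier (convexHull ℝ S)) →
      v ≠ v₀ → ⟪q, v⟫ < ⟪q, v₀⟫ := fun v hv hne =>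
    hmax v (hmodel.mem_of_add_smul_mem_frontier hPcl hv.2) hv.1 hne
  refine ⟨v₀, ⟨⟨hv₀, htangent⟩, hqv₀, hsteepest⟩, fun w ⟨hw, _, hwmax⟩ => ?_⟩
  by_contra hne
  exact lt_asymm (hsteepest w hw hne) (hwmax v₀ ⟨hv₀, htangent⟩ (Ne.symm hne))
end

section
/- Let P ⊆ ℝ³ be a convex polyhedron with 0 in its interior and let q ∈ ∂P be a regular point, i.e. there exists x ∈ P with ⟪x, q⟫ > ‖q‖². Then there exist a unit vector v and ε > 0 such that q + t·v ∈ ∂P for all t ∈ [0, ε] and ⟪q, v⟫ > 0; that is, at every regular boundary point there is at least one direction of strict ascent of the radial distance function along ∂P. (Existence part of the paper's theorem on the extended gradient.) -/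
open scoped RealInnerProductSpace

open Set Filter Topology

/-! Moving from `q` towards a point `x ∈ P` with `⟪x, q⟫ > ‖q‖²` and projecting radially back
onto `∂P` (with the gauge of `P`) gives frontier points `z → q` with `⟪q, z - q⟫ > 0`. By
Krein–Milman, `∂P` is covered by finitely many closed faces, each the convex hull of some
vertices, so one face contains both `q` and such a `z`; the segment from `q` to `z` lies in that
face, hence in `∂P`, and points in an ascent direction. -/

theorem ContinuousLinearMap.toExposed_subset_frontier {E : Type*} [NormedAddCommGroup E]
    [NormedSpace ℝ E] {f : StrongDual ℝ E} (hf : f ≠ 0) (A : Set E) :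
    f.toExposed A ⊆ frontier A := by
  rintro y ⟨hyA, hmax⟩
  refine ⟨subset_closure hyA, fun hyint => hf ?_⟩
  have hloc : IsLocalMax f y :=
    Filter.mem_of_superset (mem_interior_iff_mem_nhds.mp hyint) hmax
  exact hloc.hasFDerivAt_eq_zero f.hasFDerivAt

theorem exists_subset_mem_convexHull_subset_frontier {E : Type*} [NormedAddCommGroup E]
    [NormedSpace ℝ E] {S : Set E} (hS : S.Finite) (hint : (interior (convexHull ℝ S)).Nonempty)
    {z : E} (hz : z ∈ frontier (convexHull ℝ S)) :
    ∃ A ⊆ S, z ∈ convexHull ℝ A ∧ convexHull ℝ A ⊆ frontier (convexHull ℝ S) := by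
  have hcompact : IsCompact (convexHull ℝ S) := hS.isCompact_convexHull ℝ
  obtain ⟨f, hf0, hfz⟩ := geometric_hahn_banach_of_nonempty_interior_point
    (convex_convexHull ℝ S) hz.2 hint
  set B := f.toExposed (convexHull ℝ S)
  have hB : IsExposed ℝ (convexHull ℝ S) B := ContinuousLinearMap.toExposed.isExposed
  have hAS : B.extremePoints ℝ ⊆ S :=
    hB.isExtreme.extremePoints_subset_extremePoints.trans extremePoints_convexHull_subset
  -- Krein–Milman; the closure can be dropped since `B` has finitely many extreme points.
  have hBhull : convexHull ℝ (B.extremePoints ℝ) = B := by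
    rw [← ((hS.subset hAS).isClosed_convexHull ℝ).closure_eq]
    exact closure_convexHull_extremePoints (hB.isCompact hcompact)
      (hB.convex (convex_convexHull ℝ S))
  refine ⟨B.extremePoints ℝ, hAS, ?_, ?_⟩ <;> rw [hBhull]
  · exact ⟨hcompact.isClosed.frontier_subset hz, hfz⟩
  · exact f.toExposed_subset_frontier hf0 _

theorem Set.Finite.exists_mem_and_inter_nonempty_of_mem_closure_inter_biUnion
    {X ι : Type*} [TopologicalSpace X] {I : Set ι} (hI : I.Finite) {K : ι → Set X}
    (hK : ∀ i ∈ I, IsClosed (K i)) {s : Set X} {q : X}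
    (hq : q ∈ closure (s ∩ ⋃ i ∈ I, K i)) :
    ∃ i ∈ I, q ∈ K i ∧ (s ∩ K i).Nonempty := by
  rw [inter_iUnion₂, hI.closure_biUnion, mem_iUnion₂] at hq
  obtain ⟨i, hi, hqi⟩ := hq
  exact ⟨i, hi, (hK i hi).closure_subset (closure_mono inter_subset_right hqi),
    closure_nonempty_iff.mp ⟨q, hqi⟩⟩

section InnerProductSpace

variable {E : Type*} [NormedAddCommGroup E] [InnerProductSpace ℝ E]

theorem mem_closure_inner_sub_pos_inter_frontier {P : Set E} (hc : Convex ℝ P) (h0 : P ∈ 𝓝 0)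
    {q x : E} (hq : q ∈ frontier P) (hx : x ∈ P) (hxq : ‖q‖ ^ 2 < ⟪x, q⟫) :
    q ∈ closure ({z | 0 < ⟪q, z - q⟫} ∩ frontier P) := by
  set y : ℝ → E := fun t => q + t • (x - q)
  set g : ℝ → ℝ := fun t => gauge P (y t)
  have hgq : gauge P q = 1 := (gauge_eq_one_iff_mem_frontier hc h0).2 hq
  have hg_cont : Continuous g := (continuous_gauge hc h0).comp (by fun_prop)
  have hg0 : g 0 = 1 := by simp [g, y, hgq]
  have hg_le : ∀ t ∈ Icc (0 : ℝ) 1, g t ≤ 1 := by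
    intro t ht
    have habs : Absorbent ℝ P := absorbent_nhds_zero h0
    calc g t = gauge P ((1 - t) • q + t • x) := by simp only [g, y]; congr 1; module
      _ ≤ gauge P ((1 - t) • q) + gauge P (t • x) := gauge_add_le hc habs _ _
      _ = (1 - t) * 1 + t * gauge P x := by
          rw [gauge_smul_of_nonneg (sub_nonneg.2 ht.2), gauge_smul_of_nonneg ht.1, hgq]; rfl
      _ ≤ 1 := by nlinarith [gauge_le_one_of_mem hx, ht.1]
  have htendsto : Tendsto (fun t => (g t)⁻¹ • y t) (𝓝[>] 0) (𝓝 q) := by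
    have hcont : ContinuousAt (fun t => (g t)⁻¹ • y t) 0 :=
      (hg_cont.continuousAt.inv₀ (by simp [hg0])).smul (by fun_prop)
    simpa [hg0, y] using hcont.tendsto.mono_left nhdsWithin_le_nhds
  have hg_pos : ∀ᶠ t in 𝓝[>] (0 : ℝ), 0 < g t :=
    nhdsWithin_le_nhds (hg_cont.continuousAt.eventually (lt_mem_nhds (by simp [hg0])))
  refine mem_closure_of_tendsto htendsto ?_
  filter_upwards [hg_pos, Ioo_mem_nhdsGT one_pos] with t hgt ht
  have hyq : ‖q‖ ^ 2 < ⟪q, y t⟫ := by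
    simp only [y, inner_add_right, inner_smul_right, inner_sub_right, real_inner_self_eq_norm_sq,
      real_inner_comm x q]
    nlinarith [ht.1]
  constructor
  · have hinv : 1 ≤ (g t)⁻¹ := (one_le_inv₀ hgt).2 (hg_le t (Ioo_subset_Icc_self ht))
    show 0 < ⟪q, (g t)⁻¹ • y t - q⟫
    rw [inner_sub_right, inner_smul_right, real_inner_self_eq_norm_sq]
    nlinarith [sq_nonneg ‖q‖]
  · rw [← gauge_eq_one_iff_mem_frontier hc h0, gauge_smul_of_nonneg (inv_nonneg.2 hgt.le)]
    exact inv_mul_cancel₀ hgt.ne'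

theorem Convex.exists_norm_eq_one_add_smul_mem_of_inner_sub_pos {K : Set E} (hK : Convex ℝ K)
    {q z : E} (hq : q ∈ K) (hz : z ∈ K) (hqz : 0 < ⟪q, z - q⟫) :
    ∃ v : E, ‖v‖ = 1 ∧ (∃ ε > (0 : ℝ), ∀ t ∈ Icc (0 : ℝ) ε, q + t • v ∈ K) ∧ 0 < ⟪q, v⟫ := by
  have hne : z - q ≠ 0 := fun h => by simp [h] at hqz
  have hε : 0 < ‖z - q‖ := norm_pos_iff.2 hne
  refine ⟨‖z - q‖⁻¹ • (z - q), norm_smul_inv_norm hne, ⟨‖z - q‖, hε, fun t ht => ?_⟩, ?_⟩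
  · rw [smul_smul]
    exact hK.add_smul_sub_mem hq hz
      ⟨mul_nonneg ht.1 (inv_nonneg.2 hε.le), mul_inv_le_one_of_le₀ ht.2 hε.le⟩
  · rw [inner_smul_right]
    positivity

end InnerProductSpace

/-- at a regular boundary point `q` of a convex polyhedron `P` (with `0` in
its interior), there exists at least one boundary-tangent direction of strict ascent of
the radial distance function. -/
theorem exists_ascent_direction_at_regular_point
    (S : Set (EuclideanSpace ℝ (Fin 3))) (hSfin : S.Finite)
    (P : Set (EuclideanSpace ℝ (Fin 3))) (hP : P = convexHull ℝ S)
    (h0 : (0 : EuclideanSpace ℝ (Fin 3)) ∈ interior P)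
    (q : EuclideanSpace ℝ (Fin 3)) (hq : q ∈ frontier P)
    (hreg : ∃ x ∈ P, ‖q‖ ^ 2 < ⟪x, q⟫) :
    ∃ v : EuclideanSpace ℝ (Fin 3), ‖v‖ = 1 ∧
      (∃ ε > (0 : ℝ), ∀ t ∈ Set.Icc (0 : ℝ) ε, q + t • v ∈ frontier P) ∧
      0 < ⟪q, v⟫ := by
  obtain ⟨x, hxP, hxq⟩ := hreg
  subst hP
  set faces := {A | A ⊆ S ∧ convexHull ℝ A ⊆ frontier (convexHull ℝ S)}
  have hfrontier : frontier (convexHull ℝ S) ⊆ ⋃ A ∈ faces, convexHull ℝ A := fun z hz => by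
    obtain ⟨A, hAS, hzA, hAfr⟩ := exists_subset_mem_convexHull_subset_frontier hSfin ⟨0, h0⟩ hz
    exact mem_biUnion ⟨hAS, hAfr⟩ hzA
  have hq' := closure_mono (inter_subset_inter_right _ hfrontier)
    (mem_closure_inner_sub_pos_inter_frontier (convex_convexHull ℝ S)
      (mem_interior_iff_mem_nhds.mp h0) hq hxP hxq)
  obtain ⟨A, ⟨hAS, hAfr⟩, hqA, z, hz, hzA⟩ :=
    (hSfin.finite_subsets.subset fun A hA => hA.1)
      |>.exists_mem_and_inter_nonempty_of_mem_closure_inter_biUnion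
      (fun A hA => (hSfin.subset hA.1).isClosed_convexHull ℝ) hq'
  obtain ⟨v, hv, ⟨ε, hε, hseg⟩, hqv⟩ :=
    (convex_convexHull ℝ A).exists_norm_eq_one_add_smul_mem_of_inner_sub_pos hqA hzA hz
  exact ⟨v, hv, ⟨ε, hε, fun t ht => hAfr (hseg t ht)⟩, hqv⟩
end

section
/- Let P ⊆ ℝ³ be a compact convex set with 0 in its interior, let k ≥ 2, and let q₀, q₁, …, q_k ∈ ℝ³ be points such that each segment [q_{i−1}, q_i] is nondegenerate and contained in ∂P, and such that q_{i−1}, q_i, q_{i+1} are not collinear for 1 ≤ i ≤ k−1. Assume the norm strictly increases along the polygonal path q₀ → q₁ → ⋯ → q_k (if x strictly precedes y on the path then ‖x‖ < ‖y‖). For each i let L_i be the line through q_{i−1} and q_i (note 0 ∉ L_i), let Q_i be the plane containing 0 and L_i, and let T_i be the plane containing L_i and perpendicular to Q_i; assume that each T_i supports P (P lies in one of the closed half-spaces bounded by T_i) and that q_{i+1} ∉ T_i and q_{i−1} ∉ T_{i+1} for 1 ≤ i ≤ k−1. Then the sequence of distances dist(0, L₁) < dist(0, L₂) < ⋯ <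 dist(0, L_k) is strictly increasing. (This is the paper's theorem that the distances from the reference point to the lines of consecutive segments of an ascending curve strictly increase.) -/
/-!
The normal `m` of the supporting plane through the line `ab` lies in the plane spanned by `0`,
`a`, `b` and is orthogonal to `v = b - a`, so `b = s • m + r • v`. Since `0` is interior to `P`,
`s > 0`; since the norm increases along `[a, b]`, `r ≥ 0`. The next vertex `c` lies strictly on
the side of the plane containing `P`, so for `w = c - b` we get `⟪w, b⟫ = s ⟪w, m⟫ + r ⟪w, v⟫ <
r ‖v‖ ‖w‖`: the component of `b` along `w` is shorter than along `v`. As the squared distance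
from `0` to a line through `b` with direction `u` is `‖b‖² - (⟪u, b⟫ / ‖u‖)²`, the line `bc` is
farther from `0` than the line `ab`.
-/

open scoped RealInnerProductSpace
open Filter Topology

section InnerProductSpace

variable {E : Type*} [NormedAddCommGroup E] [InnerProductSpace ℝ E]

theorem infDist_zero_affineSpan_pair_sq {a b p : E} (hp : p ∈ line[ℝ, a, b]) :
    Metric.infDist 0 (line[ℝ, a, b] : Set E) ^ 2 = ‖p‖ ^ 2 - (⟪b - a, p⟫ / ‖b - a‖) ^ 2 := by
  set v := b - a
  rcases eq_or_ne v 0 with hv | hv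
  · obtain rfl : b = a := sub_eq_zero.1 hv
    obtain rfl : p = b := by simpa using hp
    simp [hv, Metric.infDist_singleton]
  have hv2 : ‖v‖ ^ 2 ≠ 0 := by positivity
  set t := ⟪v, p⟫ / ‖v‖ ^ 2 with ht
  have hdir : line[ℝ, a, b].direction = ℝ ∙ v := by
    rw [direction_affineSpan, vectorSpan_pair_rev, vsub_eq_sub]
  have hfoot : p - t • v ∈ line[ℝ, a, b] := by
    simpa [sub_eq_neg_add] using AffineSubspace.vadd_mem_of_mem_direction
      (hdir ▸ Submodule.neg_mem _ (Submodule.smul_mem _ t (Submodule.mem_span_singleton_self v))) hp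
  have horth : ⟪v, p - t • v⟫ = 0 := by
    rw [inner_sub_right, real_inner_smul_right, real_inner_self_eq_norm_sq, ht,
      div_mul_cancel₀ _ hv2, sub_self]
  have hdist : Metric.infDist 0 (line[ℝ, a, b] : Set E) = ‖p - t • v‖ := by
    have : Nonempty line[ℝ, a, b] := ⟨⟨p, hp⟩⟩
    rw [← EuclideanGeometry.dist_orthogonalProjection_eq_infDist,
      EuclideanGeometry.coe_orthogonalProjection_eq_iff_mem.2 ⟨hfoot, ?_⟩, dist_zero_left]
    rw [hdir, Submodule.mem_orthogonal_singleton_iff_inner_right, vsub_eq_sub, zero_sub,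
      inner_neg_right, horth, neg_zero]
  rw [hdist, norm_sub_sq_real, real_inner_smul_right, norm_smul, mul_pow, Real.norm_eq_abs, sq_abs,
    real_inner_comm, ht]
  field_simp
  ring

theorem inner_sub_nonneg_of_monotoneOn_norm_lineMap {a b : E}
    (h : MonotoneOn (fun t : ℝ => ‖AffineMap.lineMap a b t‖) (Set.Icc 0 1)) :
    0 ≤ ⟪a, b - a⟫ := by
  have hpos : ∀ t ∈ Set.Ioc (0 : ℝ) 1, 0 ≤ 2 * ⟪a, b - a⟫ + t * ‖b - a‖ ^ 2 := by
    intro t ⟨ht0, ht1⟩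
    have hle : ‖a‖ ≤ ‖t • (b - a) + a‖ := by
      simpa [AffineMap.lineMap_apply_module'] using
        h (Set.left_mem_Icc.2 zero_le_one) ⟨ht0.le, ht1⟩ ht0.le
    have hsq := pow_le_pow_left₀ (norm_nonneg _) hle 2
    rw [norm_add_sq_real, norm_smul, real_inner_smul_left, Real.norm_eq_abs, abs_of_pos ht0,
      real_inner_comm] at hsq
    nlinarith
  have hlim : Tendsto (fun t : ℝ => 2 * ⟪a, b - a⟫ + t * ‖b - a‖ ^ 2) (𝓝[>] 0)
      (𝓝 (2 * ⟪a, b - a⟫)) := tendsto_nhdsWithin_of_tendsto_nhds <|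
    (by fun_prop : Continuous fun t : ℝ => 2 * ⟪a, b - a⟫ + t * ‖b - a‖ ^ 2).tendsto' 0 _ (by simp)
  linarith [ge_of_tendsto hlim (eventually_of_mem (Ioc_mem_nhdsGT one_pos) hpos)]

theorem inner_pos_of_zero_mem_interior {P : Set E} (h0 : (0 : E) ∈ interior P) {m a : E}
    (hm : m ≠ 0) (hP : ∀ x ∈ P, ⟪m, x - a⟫ ≤ 0) : 0 < ⟪m, a⟫ := by
  have hsmul : Tendsto (fun t : ℝ => t • m) (𝓝[>] 0) (𝓝 0) := tendsto_nhdsWithin_of_tendsto_nhds <|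
    (by fun_prop : Continuous fun t : ℝ => t • m).tendsto' 0 0 (zero_smul ℝ m)
  obtain ⟨t, htP, ht⟩ :=
    ((hsmul.eventually (mem_interior_iff_mem_nhds.1 h0)).and self_mem_nhdsWithin).exists
  have hmt := hP _ htP
  rw [inner_sub_right, real_inner_smul_right, real_inner_self_eq_norm_sq] at hmt
  have : 0 < t * ‖m‖ ^ 2 := mul_pos ht (by positivity)
  linarith

theorem mem_span_pair_of_inner_sub_eq_zero {a b m : E} (hm : m ≠ 0)
    (hmab : m ∈ Submodule.span ℝ {a, b}) (hmv : ⟪m, b - a⟫ = 0) :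
    b ∈ Submodule.span ℝ {m, b - a} := by
  obtain ⟨x, y, rfl⟩ := Submodule.mem_span_pair.1 hmab
  have hxy : x + y ≠ 0 := by
    intro hxy
    have hmv' : x • a + y • b = -x • (b - a) := by
      rw [eq_neg_of_add_eq_zero_right hxy]; module
    apply hm
    rw [← inner_self_eq_zero (𝕜 := ℝ)]
    nth_rewrite 2 [hmv']
    rw [real_inner_smul_right, hmv, mul_zero]
  refine Submodule.mem_span_pair.2 ⟨(x + y)⁻¹, (x + y)⁻¹ * x, ?_⟩
  rw [mul_smul, ← smul_add, inv_smul_eq_iff₀ hxy]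
  module

theorem inner_div_norm_lt_of_mem_span_pair {b m v w : E} (hb : b ∈ Submodule.span ℝ {m, v})
    (hmv : ⟪m, v⟫ = 0) (hv : v ≠ 0) (hw : w ≠ 0) (hmb : 0 < ⟪m, b⟫) (hvb : 0 ≤ ⟪v, b⟫)
    (hmw : ⟪m, w⟫ < 0) : ⟪w, b⟫ / ‖w‖ < ⟪v, b⟫ / ‖v‖ := by
  obtain ⟨s, r, rfl⟩ := Submodule.mem_span_pair.1 hb
  have hv2 : 0 < ‖v‖ ^ 2 := by positivity
  have hmb' : ⟪m, s • m + r • v⟫ = s * ‖m‖ ^ 2 := by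
    rw [inner_add_right, real_inner_smul_right, real_inner_smul_right, hmv,
      real_inner_self_eq_norm_sq, mul_zero, add_zero]
  have hvb' : ⟪v, s • m + r • v⟫ = r * ‖v‖ ^ 2 := by
    rw [inner_add_right, real_inner_smul_right, real_inner_smul_right, real_inner_comm, hmv,
      real_inner_self_eq_norm_sq, mul_zero, zero_add]
  have hs : 0 < s := pos_of_mul_pos_left (hmb' ▸ hmb) (by positivity)
  have hr : 0 ≤ r := nonneg_of_mul_nonneg_left (hvb' ▸ hvb) hv2
  have hwb : ⟪w, s • m + r • v⟫ < r * ‖v‖ * ‖w‖ := calc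
    ⟪w, s • m + r • v⟫ = s * ⟪m, w⟫ + r * ⟪w, v⟫ := by
      rw [inner_add_right, real_inner_smul_right, real_inner_smul_right, real_inner_comm m]
    _ < r * ⟪w, v⟫ := by linarith [mul_neg_of_pos_of_neg hs hmw]
    _ ≤ r * (‖w‖ * ‖v‖) := by gcongr; exact real_inner_le_norm w v
    _ = r * ‖v‖ * ‖w‖ := by ring
  have hv1 : r * ‖v‖ ^ 2 / ‖v‖ = r * ‖v‖ := by field_simp
  rwa [hvb', hv1, div_lt_iff₀ (norm_pos_iff.2 hw)]

theorem infDist_zero_affineSpan_pair_lt {P : Set E} (h0 : (0 : E) ∈ interior P) {a b c m : E}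
    (hab : a ≠ b) (hbc : b ≠ c) (hm : m ≠ 0) (hmab : m ∈ Submodule.span ℝ {a, b})
    (hmv : ⟪m, b - a⟫ = 0) (hP : ∀ x ∈ P, ⟪m, x - a⟫ ≤ 0) (hc : c ∈ closure P)
    (hmc : ⟪m, c - b⟫ ≠ 0) (hav : 0 ≤ ⟪a, b - a⟫) (hbw : 0 ≤ ⟪b, c - b⟫) :
    Metric.infDist 0 (line[ℝ, a, b] : Set E) < Metric.infDist 0 (line[ℝ, b, c] : Set E) := by
  have hmba : ⟪m, b⟫ = ⟪m, a⟫ := by rwa [inner_sub_right, sub_eq_zero] at hmv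
  have hmc' : ⟪m, c - b⟫ < 0 := by
    have hca : ⟪m, c - a⟫ ≤ 0 :=
      closure_minimal (t := {x | ⟪m, x - a⟫ ≤ 0}) hP (isClosed_le (by fun_prop) continuous_const) hc
    rw [inner_sub_right, hmba, ← inner_sub_right] at hmc ⊢
    exact hca.lt_of_ne hmc
  have hvb : 0 ≤ ⟪b - a, b⟫ := by
    have : ⟪b - a, b⟫ = ⟪a, b - a⟫ + ‖b - a‖ ^ 2 := by
      rw [← real_inner_self_eq_norm_sq, real_inner_comm (b - a) a, ← inner_add_right,
        add_sub_cancel]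
    rw [this]
    positivity
  have hlt := inner_div_norm_lt_of_mem_span_pair (mem_span_pair_of_inner_sub_eq_zero hm hmab hmv)
    hmv (sub_ne_zero.2 hab.symm) (sub_ne_zero.2 hbc.symm)
    (hmba ▸ inner_pos_of_zero_mem_interior h0 hm hP) hvb hmc'
  have hwb : 0 ≤ ⟪c - b, b⟫ / ‖c - b‖ := div_nonneg (real_inner_comm b _ ▸ hbw) (norm_nonneg _)
  refine lt_of_pow_lt_pow_left₀ 2 Metric.infDist_nonneg ?_
  rw [infDist_zero_affineSpan_pair_sq (right_mem_affineSpan_pair ℝ a b),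
    infDist_zero_affineSpan_pair_sq (left_mem_affineSpan_pair ℝ b c)]
  linarith [pow_lt_pow_left₀ hlt hwb two_ne_zero]

end InnerProductSpace

theorem infDist_to_segment_lines_strict_mono_general
    (P : Set (EuclideanSpace ℝ (Fin 3)))
    (h0 : (0 : EuclideanSpace ℝ (Fin 3)) ∈ interior P)
    (k : ℕ)
    (q : ℕ → EuclideanSpace ℝ (Fin 3)) (n : ℕ → EuclideanSpace ℝ (Fin 3))
    -- each segment is nondegenerate and contained in the boundary of `P`
    (hseg : ∀ i < k, q i ≠ q (i + 1) ∧ segment ℝ (q i) (q (i + 1)) ⊆ frontier P)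
    -- the norm strictly increases along the polygonal path
    (hmono : ∀ i < k, StrictMonoOn
      (fun t : ℝ => ‖AffineMap.lineMap (q i) (q (i + 1)) t‖) (Set.Icc 0 1))
    -- `n i` is the normal vector of the plane `T i`:
    (hn0 : ∀ i < k, n i ≠ 0)
    -- `T i` is perpendicular to the plane `Q i` through `0`, `q i`, `q (i+1)`,
    -- i.e. its normal lies in the direction space of `Q i`
    (hnQ : ∀ i < k, n i ∈ Submodule.span ℝ ({q i, q (i + 1)} : Set (EuclideanSpace ℝ (Fin 3))))
    -- `T i` contains the line `L i` through `q i` and `q (i+1)`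
    (hnL : ∀ i < k, ⟪n i, q (i + 1) - q i⟫ = 0)
    -- `T i` supports `P`: `P` lies in one of the closed half-spaces bounded by `T i`
    (hsupp : ∀ i < k, (∀ x ∈ P, ⟪n i, x - q i⟫ ≤ 0) ∨ (∀ x ∈ P, 0 ≤ ⟪n i, x - q i⟫))
    -- `q (i+2) ∉ T i` and `q i ∉ T (i+1)`
    (hnotin : ∀ i, i + 1 < k →
      ⟪n i, q (i + 2) - q (i + 1)⟫ ≠ 0 ∧ ⟪n (i + 1), q i - q (i + 1)⟫ ≠ 0) :
    ∀ i, i + 1 < k →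
      Metric.infDist 0 (affineSpan ℝ {q i, q (i + 1)} : Set (EuclideanSpace ℝ (Fin 3))) <
      Metric.infDist 0
        (affineSpan ℝ {q (i + 1), q (i + 2)} : Set (EuclideanSpace ℝ (Fin 3))) := by
  intro i hi
  have hi' : i < k := by omega
  obtain ⟨m, hm, hmab, hmv, hmc, hP⟩ : ∃ m, m ≠ 0 ∧ m ∈ Submodule.span ℝ {q i, q (i + 1)} ∧
      ⟪m, q (i + 1) - q i⟫ = 0 ∧ ⟪m, q (i + 2) - q (i + 1)⟫ ≠ 0 ∧ ∀ x ∈ P, ⟪m, x - q i⟫ ≤ 0 := by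
    rcases hsupp i hi' with hP | hP
    · exact ⟨n i, hn0 i hi', hnQ i hi', hnL i hi', (hnotin i hi).1, hP⟩
    · refine ⟨-n i, neg_ne_zero.2 (hn0 i hi'), neg_mem (hnQ i hi'), ?_, ?_, fun x hx => ?_⟩ <;>
        simp only [inner_neg_left, neg_eq_zero, ne_eq, neg_nonpos]
      exacts [hnL i hi', (hnotin i hi).1, hP x hx]
  exact infDist_zero_affineSpan_pair_lt h0 (hseg i hi').1 (hseg (i + 1) hi).1 hm hmab hmv hP
    (frontier_subset_closure ((hseg (i + 1) hi).2 (right_mem_segment ℝ _ _))) hmc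
    (inner_sub_nonneg_of_monotoneOn_norm_lineMap (hmono i hi').monotoneOn)
    (inner_sub_nonneg_of_monotoneOn_norm_lineMap (hmono (i + 1) hi).monotoneOn)

/-- along an ascending polygonal path `q 0 → q 1 → ⋯ → q k` on the boundary
of a compact convex body `P ∋ 0`, whose segments satisfy the supporting-plane condition
(the plane `T i` through the line `L i` of the `i`-th segment, perpendicular to the plane
`Q i` spanned by `0` and `L i`, supports `P`, with normal `n i`), and along which the norm
strictly increases, the distances from `0` to the lines of consecutive segments strictly
increase. Here the `i`-th segment is `[q i, q (i+1)]` for `0 ≤ i < k`. -/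
theorem infDist_to_segment_lines_strict_mono
    (P : Set (EuclideanSpace ℝ (Fin 3))) (hPc : IsCompact P) (hPconv : Convex ℝ P)
    (h0 : (0 : EuclideanSpace ℝ (Fin 3)) ∈ interior P)
    (k : ℕ) (hk : 2 ≤ k)
    (q : ℕ → EuclideanSpace ℝ (Fin 3)) (n : ℕ → EuclideanSpace ℝ (Fin 3))
    -- each segment is nondegenerate and contained in the boundary of `P`
    (hseg : ∀ i < k, q i ≠ q (i + 1) ∧ segment ℝ (q i) (q (i + 1)) ⊆ frontier P)
    -- consecutive vertices are not collinear
    (hcol : ∀ i, 1 ≤ i → i < k →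
      ¬ Collinear ℝ ({q (i - 1), q i, q (i + 1)} : Set (EuclideanSpace ℝ (Fin 3))))
    -- the norm strictly increases along the polygonal path
    (hmono : ∀ i < k, StrictMonoOn
      (fun t : ℝ => ‖AffineMap.lineMap (q i) (q (i + 1)) t‖) (Set.Icc 0 1))
    -- `n i` is the normal vector of the plane `T i`:
    (hn0 : ∀ i < k, n i ≠ 0)
    -- `T i` is perpendicular to the plane `Q i` through `0`, `q i`, `q (i+1)`,
    -- i.e. its normal lies in the direction space of `Q i`
    (hnQ : ∀ i < k, n i ∈ Submodule.span ℝ ({q i, q (i + 1)} : Set (EuclideanSpace ℝ (Fin 3))))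
    -- `T i` contains the line `L i` through `q i` and `q (i+1)`
    (hnL : ∀ i < k, ⟪n i, q (i + 1) - q i⟫ = 0)
    -- `T i` supports `P`: `P` lies in one of the closed half-spaces bounded by `T i`
    (hsupp : ∀ i < k, (∀ x ∈ P, ⟪n i, x - q i⟫ ≤ 0) ∨ (∀ x ∈ P, 0 ≤ ⟪n i, x - q i⟫))
    -- `q (i+2) ∉ T i` and `q i ∉ T (i+1)`
    (hnotin : ∀ i, i + 1 < k →
      ⟪n i, q (i + 2) - q (i + 1)⟫ ≠ 0 ∧ ⟪n (i + 1), q i - q (i + 1)⟫ ≠ 0) :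
    ∀ i, i + 1 < k →
      Metric.infDist 0 (affineSpan ℝ {q i, q (i + 1)} : Set (EuclideanSpace ℝ (Fin 3))) <
      Metric.infDist 0
        (affineSpan ℝ {q (i + 1), q (i + 2)} : Set (EuclideanSpace ℝ (Fin 3))) :=
  infDist_to_segment_lines_strict_mono_general P h0 k q n hseg hmono hn0 hnQ hnL hsupp hnotin
end

section
/- Let o, q₀, q₁, q₂ ∈ ℝ³ with q₀, q₁, q₂ not collinear, let H be the plane through q₀, q₁, q₂, and let o′ be the orthogonal projection of o onto H. Suppose o′ = q₁ + a·(q₀ − q₁) + b·(q₂ − q₁) with a > 0 and b > 0 (o′ lies in the interior of the convex angular region at q₁ bounded by the rays toward q₀ and q₂), and suppose the distance to o strictly increases along the polygonal path q₀ → q₁ → q₂ (if x strictly precedes y on the path then ‖x − o‖ < ‖y − o‖). Then dist(o, line(q₀, q₁)) < dist(o, line(q₁, q₂)). -/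
open scoped RealInnerProductSpace

/-!
Put `u = q₀ - q₁`, `v = q₂ - q₁`, `w = o - q₁` and let `û, v̂` be the unit vectors along `u, v`.
By Pythagoras the squared distances from `o` to the two lines are `‖w‖² - ⟪û, w⟫²` and
`‖w‖² - ⟪v̂, w⟫²`. That the distance grows as one leaves `q₁` towards `q₂` forces `⟪v̂, w⟫ ≤ 0`.
Since `o - o'` is orthogonal to the plane, `⟪û + v̂, w⟫ = ⟪û + v̂, a u + b v⟫`, which is positive
because `û + v̂` makes an acute angle with both `u` and `v` (the angle at `q₁` is less than `π`).
Hence `⟪û, w⟫ > |⟪v̂, w⟫|`.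
-/

section

variable {E : Type*} [NormedAddCommGroup E] [InnerProductSpace ℝ E]

open AffineMap EuclideanGeometry in
-- Also valid for `y = x`: the line is then `{x}` and the quotient is `0 / 0 = 0`.
theorem infDist_affineSpan_pair_sq_add_sq (o x y : E) :
    Metric.infDist o (line[ℝ, x, y] : Set E) ^ 2 + (⟪y - x, o - x⟫ / ‖y - x‖) ^ 2
      = ‖o - x‖ ^ 2 := by
  rcases eq_or_ne y x with rfl | hyx
  · simp [Metric.infDist_singleton, dist_eq_norm]
  have hyx' : ‖y - x‖ ≠ 0 := norm_ne_zero_iff.mpr (sub_ne_zero.mpr hyx)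
  set c := ⟪y - x, o - x⟫ / ‖y - x‖ ^ 2 with hc
  have hfoot : o - lineMap x y c = (o - x) - c • (y - x) := by
    rw [lineMap_apply_module']; abel
  have hproj : orthogonalProjection line[ℝ, x, y] o = lineMap x y c := by
    refine coe_orthogonalProjection_eq_iff_mem.mpr ⟨lineMap_mem_affineSpan_pair _ _ _, ?_⟩
    rw [direction_affineSpan, vectorSpan_pair_rev, vsub_eq_sub, vsub_eq_sub, hfoot,
      Submodule.mem_orthogonal_singleton_iff_inner_right, inner_sub_right,
      real_inner_smul_right, real_inner_self_eq_norm_sq, hc]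
    field_simp
    ring
  rw [← dist_orthogonalProjection_eq_infDist, hproj, dist_eq_norm, hfoot, norm_sub_sq_real,
    real_inner_smul_right, norm_smul, mul_pow, Real.norm_eq_abs, sq_abs, real_inner_comm, hc]
  field_simp
  ring

theorem neg_norm_mul_norm_lt_inner_sub_of_not_collinear {p₀ p₁ p₂ : E}
    (h : ¬ Collinear ℝ ({p₀, p₁, p₂} : Set E)) :
    -(‖p₀ - p₁‖ * ‖p₂ - p₁‖) < ⟪p₀ - p₁, p₂ - p₁⟫ := by
  have h₀ : p₀ - p₁ ≠ 0 := sub_ne_zero.mpr (ne₁₂_of_not_collinear h)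
  have h₂ : p₂ - p₁ ≠ 0 := sub_ne_zero.mpr (ne₂₃_of_not_collinear h).symm
  refine (neg_le_of_abs_le (abs_real_inner_le_norm _ _)).lt_of_ne ?_
  exact fun heq ↦ EuclideanGeometry.angle_ne_pi_of_not_collinear h
    ((InnerProductGeometry.inner_eq_neg_mul_norm_iff_angle_eq_pi h₀ h₂).mp heq.symm)

theorem inner_div_norm_add_inner_div_norm_pos {u v : E} (huv : -(‖u‖ * ‖v‖) < ⟪u, v⟫)
    {a b : ℝ} (ha : 0 < a) (hb : 0 < b) :
    0 < ⟪u, a • u + b • v⟫ / ‖u‖ + ⟪v, a • u + b • v⟫ / ‖v‖ := by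
  have hu : 0 < ‖u‖ := norm_pos_iff.mpr fun h ↦ by simp [h] at huv
  have hv : 0 < ‖v‖ := norm_pos_iff.mpr fun h ↦ by simp [h] at huv
  have key : ⟪u, a • u + b • v⟫ / ‖u‖ + ⟪v, a • u + b • v⟫ / ‖v‖
      = (a / ‖v‖ + b / ‖u‖) * (‖u‖ * ‖v‖ + ⟪u, v⟫) := by
    simp only [inner_add_right, real_inner_smul_right, real_inner_self_eq_norm_sq,
      real_inner_comm u v]
    field_simp
    ring
  rw [key]
  exact mul_pos (by positivity) (by linarith)

open Filter Topology in
theorem inner_sub_nonpos_of_strictMonoOn_norm_lineMap_sub {p q o : E}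
    (h : StrictMonoOn (fun t : ℝ ↦ ‖AffineMap.lineMap p q t - o‖) (Set.Icc 0 1)) :
    ⟪q - p, o - p⟫ ≤ 0 := by
  have hsq (t : ℝ) : ‖AffineMap.lineMap p q t - o‖ ^ 2
      = ‖p - o‖ ^ 2 - 2 * t * ⟪q - p, o - p⟫ + t ^ 2 * ‖q - p‖ ^ 2 := by
    rw [AffineMap.lineMap_apply_module', show t • (q - p) + p - o = t • (q - p) - (o - p) by abel,
      norm_sub_sq_real, real_inner_smul_left, norm_smul, mul_pow, Real.norm_eq_abs, sq_abs,
      ← norm_neg (o - p), neg_sub]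
    ring
  have hlt : ∀ᶠ t in 𝓝[>] (0 : ℝ), 2 * ⟪q - p, o - p⟫ ≤ t * ‖q - p‖ ^ 2 := by
    filter_upwards [Ioc_mem_nhdsGT one_pos] with t ht
    have := h (Set.left_mem_Icc.mpr zero_le_one) (Set.Ioc_subset_Icc_self ht) ht.1
    have := pow_lt_pow_left₀ this (norm_nonneg _) two_ne_zero
    rw [hsq, hsq] at this
    nlinarith [ht.1]
  have hlim : Tendsto (fun t : ℝ ↦ t * ‖q - p‖ ^ 2) (𝓝[>] 0) (𝓝 0) := by
    simpa using ((continuous_mul_const (‖q - p‖ ^ 2)).tendsto 0).mono_left nhdsWithin_le_nhds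
  linarith [ge_of_tendsto hlim hlt]

theorem infDist_affineSpan_pair_lt_of_inner_div_norm_add_pos {o x y z : E}
    (hz : ⟪z - x, o - x⟫ ≤ 0) (h : 0 < ⟪y - x, o - x⟫ / ‖y - x‖ + ⟪z - x, o - x⟫ / ‖z - x‖) :
    Metric.infDist o (line[ℝ, x, y] : Set E) < Metric.infDist o (line[ℝ, x, z] : Set E) := by
  have hxy := infDist_affineSpan_pair_sq_add_sq o x y
  have hxz := infDist_affineSpan_pair_sq_add_sq o x z
  have hz' : ⟪z - x, o - x⟫ / ‖z - x‖ ≤ 0 := div_nonpos_of_nonpos_of_nonneg hz (norm_nonneg _)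
  refine lt_of_pow_lt_pow_left₀ 2 Metric.infDist_nonneg ?_
  nlinarith

end

theorem infDist_line_lt_of_ascending_corner_general
    (o q₀ q₁ q₂ o' : EuclideanSpace ℝ (Fin 3))
    (hcol : ¬ Collinear ℝ ({q₀, q₁, q₂} : Set (EuclideanSpace ℝ (Fin 3))))
    (H : Set (EuclideanSpace ℝ (Fin 3)))
    (hH : H = (affineSpan ℝ {q₀, q₁, q₂} : Set (EuclideanSpace ℝ (Fin 3))))
    -- `o'` is the orthogonal projection of `o` onto `H`
    (ho'perp : ∀ x ∈ H, ⟪o - o', x - o'⟫ = 0)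
    (a b : ℝ) (ha : 0 < a) (hb : 0 < b)
    (ho' : o' = q₁ + a • (q₀ - q₁) + b • (q₂ - q₁))
    -- the distance to `o` strictly increases along the path `q₀ → q₁ → q₂`
    (hmono₂ : StrictMonoOn (fun t : ℝ => ‖AffineMap.lineMap q₁ q₂ t - o‖) (Set.Icc 0 1)) :
    Metric.infDist o (affineSpan ℝ {q₀, q₁} : Set (EuclideanSpace ℝ (Fin 3))) <
    Metric.infDist o (affineSpan ℝ {q₁, q₂} : Set (EuclideanSpace ℝ (Fin 3))) := by
  have hmem : ∀ x ∈ ({q₀, q₁, q₂} : Set _), x ∈ H := hH ▸ subset_affineSpan ℝ _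
  have hw : o - q₁ = (o - o') + (a • (q₀ - q₁) + b • (q₂ - q₁)) := by rw [ho']; abel
  have hperp : ∀ x ∈ ({q₀, q₁, q₂} : Set _), ⟪x - q₁, o - o'⟫ = 0 := fun x hx ↦ by
    rw [← sub_sub_sub_cancel_right x q₁ o', inner_sub_left, real_inner_comm,
      ho'perp x (hmem x hx), real_inner_comm, ho'perp q₁ (hmem q₁ (by simp)), sub_zero]
  have hinner : ∀ x ∈ ({q₀, q₁, q₂} : Set _),
      ⟪x - q₁, o - q₁⟫ = ⟪x - q₁, a • (q₀ - q₁) + b • (q₂ - q₁)⟫ := fun x hx ↦ by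
    rw [hw, inner_add_right, hperp x hx, zero_add]
  have hcone := inner_div_norm_add_inner_div_norm_pos
    (neg_norm_mul_norm_lt_inner_sub_of_not_collinear hcol) ha hb
  rw [← hinner q₀ (by simp), ← hinner q₂ (by simp)] at hcone
  rw [Set.pair_comm]
  exact infDist_affineSpan_pair_lt_of_inner_div_norm_add_pos
    (inner_sub_nonpos_of_strictMonoOn_norm_lineMap_sub hmono₂) hcone

/-- if the orthogonal projection `o'` of `o` onto the plane `H` through the
non-collinear points `q₀, q₁, q₂` lies in the interior of the convex angular region at
`q₁` bounded by the rays toward `q₀` and `q₂`, and the distance to `o` strictly increases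
along the polygonal path `q₀ → q₁ → q₂`, then the line through `q₀, q₁` is strictly
closer to `o` than the line through `q₁, q₂`. -/
theorem infDist_line_lt_of_ascending_corner
    (o q₀ q₁ q₂ o' : EuclideanSpace ℝ (Fin 3))
    (hcol : ¬ Collinear ℝ ({q₀, q₁, q₂} : Set (EuclideanSpace ℝ (Fin 3))))
    (H : Set (EuclideanSpace ℝ (Fin 3)))
    (hH : H = (affineSpan ℝ {q₀, q₁, q₂} : Set (EuclideanSpace ℝ (Fin 3))))
    -- `o'` is the orthogonal projection of `o` onto `H`
    (ho'H : o' ∈ H) (ho'perp : ∀ x ∈ H, ⟪o - o', x - o'⟫ = 0)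
    (a b : ℝ) (ha : 0 < a) (hb : 0 < b)
    (ho' : o' = q₁ + a • (q₀ - q₁) + b • (q₂ - q₁))
    -- the distance to `o` strictly increases along the path `q₀ → q₁ → q₂`
    (hmono₁ : StrictMonoOn (fun t : ℝ => ‖AffineMap.lineMap q₀ q₁ t - o‖) (Set.Icc 0 1))
    (hmono₂ : StrictMonoOn (fun t : ℝ => ‖AffineMap.lineMap q₁ q₂ t - o‖) (Set.Icc 0 1)) :
    Metric.infDist o (affineSpan ℝ {q₀, q₁} : Set (EuclideanSpace ℝ (Fin 3))) <
    Metric.infDist o (affineSpan ℝ {q₁, q₂} : Set (EuclideanSpace ℝ (Fin 3))) :=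
  infDist_line_lt_of_ascending_corner_general o q₀ q₁ q₂ o' hcol H hH ho'perp a b ha hb ho' hmono₂
end

section
/- Let V be a real inner product space and let q₀, q₁, q₂ ∈ V be such that q₀ − q₁ and q₂ − q₁ are linearly independent. Let o′ = q₁ + a·(q₀ − q₁) + b·(q₂ − q₁) with a > 0 and b > 0, and assume ⟪q₂ − q₁, q₁ − o′⟫ ≥ 0. Then dist(o′, line(q₀, q₁)) < dist(o′, line(q₁, q₂)). -/
open scoped RealInnerProductSpace


private lemma corner_aux1 (a b c p2 q2 : ℝ) (ha : 0 < a) (hb : 0 < b)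
    (hp2 : 0 < p2) (hq2 : 0 < q2) (hCS : c^2 < p2 * q2) (hipc : a * c + b * q2 ≤ 0) :
    (a * c + b * q2)^2 / q2 < (a * p2 + b * c)^2 / p2 := by
  rw [div_lt_div_iff₀ hq2 hp2]
  have h1 : b^2 * q2^2 ≤ a^2 * c^2 := by nlinarith [hipc, mul_pos hb hq2]
  have h2 : b^2 * q2 < a^2 * p2 := by nlinarith [hCS, sq_nonneg a, mul_pos ha ha]
  nlinarith [mul_pos (show (0:ℝ) < a^2 * p2 - b^2 * q2 by linarith)
    (show (0:ℝ) < p2 * q2 - c^2 by linarith)]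

private lemma corner_aux2 (B s q2 : ℝ) (hq2 : 0 < q2) :
    2 * (s * B) - s^2 * q2 ≤ B^2 / q2 := by
  rw [le_div_iff₀ hq2]
  nlinarith [sq_nonneg (s * q2 - B)]

set_option maxHeartbeats 1000000 in
/-- in a real inner product space, if `o' = q₁ + a•(q₀-q₁) + b•(q₂-q₁)` with
`a, b > 0` for linearly independent `q₀ - q₁`, `q₂ - q₁`, and `⟪q₂ - q₁, q₁ - o'⟫ ≥ 0`,
then `o'` is strictly closer to the line through `q₀, q₁` than to the line through
`q₁, q₂`. -/
theorem infDist_line_lt_of_corner_config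
    {V : Type*} [NormedAddCommGroup V] [InnerProductSpace ℝ V]
    (q₀ q₁ q₂ o' : V)
    (hli : LinearIndependent ℝ ![q₀ - q₁, q₂ - q₁])
    (a b : ℝ) (ha : 0 < a) (hb : 0 < b)
    (ho' : o' = q₁ + a • (q₀ - q₁) + b • (q₂ - q₁))
    (hip : 0 ≤ ⟪q₂ - q₁, q₁ - o'⟫) :
    Metric.infDist o' (affineSpan ℝ {q₀, q₁} : Set V) <
    Metric.infDist o' (affineSpan ℝ {q₁, q₂} : Set V) := by
  set u := q₀ - q₁ with hu_def
  set v := q₂ - q₁ with hv_def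
  have hpair := LinearIndependent.pair_iff.mp hli
  have hu : u ≠ 0 := by
    intro h; have := (hpair 1 0 (by simp [h])).1; norm_num at this
  have hv : v ≠ 0 := by
    intro h; have := (hpair 0 1 (by simp [h])).2; norm_num at this
  have hpu : (0:ℝ) < ‖u‖ := norm_pos_iff.mpr hu
  have hpv : (0:ℝ) < ‖v‖ := norm_pos_iff.mpr hv
  set p2 := ‖u‖^2 with hp2
  set q2 := ‖v‖^2 with hq2
  have hp2pos : 0 < p2 := by positivity
  have hq2pos : 0 < q2 := by positivity
  set c := ⟪u, v⟫ with hc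
  have hvu : ⟪v, u⟫ = c := by rw [real_inner_comm]
  -- strict Cauchy-Schwarz
  have hCS : c^2 < p2 * q2 := by
    have h1 : c < ‖u‖ * ‖v‖ := by
      rw [hc, inner_lt_norm_mul_iff_real]
      intro h
      have := hpair ‖v‖ (-‖u‖) (by rw [neg_smul, h]; abel)
      exact hpv.ne' this.1
    have h2 : -c < ‖u‖ * ‖v‖ := by
      have hlt : ⟪-u, v⟫ < ‖(-u : V)‖ * ‖v‖ := by
        rw [inner_lt_norm_mul_iff_real]
        intro h
        rw [norm_neg] at h
        have := hpair ‖v‖ ‖u‖ (by rw [← h, smul_neg]; abel)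
        exact hpv.ne' this.1
      rw [inner_neg_left, norm_neg] at hlt
      exact hlt
    nlinarith [abs_nonneg c, hpu, hpv]
  set w := a • u + b • v with hw
  have hwv : ⟪w, v⟫ = a * c + b * q2 := by
    rw [hw, inner_add_left, real_inner_smul_left, real_inner_smul_left,
      real_inner_self_eq_norm_sq, ← hc, ← hq2]
  have hwu : ⟪w, u⟫ = a * p2 + b * c := by
    rw [hw, inner_add_left, real_inner_smul_left, real_inner_smul_left,
      real_inner_self_eq_norm_sq, hvu, ← hp2]
  have ho'w : o' - q₁ = w := by rw [ho', hw]; abel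
  -- hypothesis hip in scalar form
  have hipc : a * c + b * q2 ≤ 0 := by
    have heq : ⟪v, q₁ - o'⟫ = -(a * c + b * q2) := by
      have h1 : q₁ - o' = -w := by rw [← ho'w]; abel
      rw [h1, inner_neg_right, real_inner_comm, hwv]
    rw [heq] at hip
    linarith
  have hkey := corner_aux1 a b c p2 q2 ha hb hp2pos hq2pos hCS hipc
  -- lower bound for distance to line q₁ q₂
  set D2 : ℝ := Real.sqrt (‖w‖^2 - ⟪w, v⟫^2 / q2) with hD2
  have hL2ne : (affineSpan ℝ ({q₁, q₂} : Set V) : Set V).Nonempty :=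
    ⟨q₁, left_mem_affineSpan_pair ℝ q₁ q₂⟩
  have hlow : D2 ≤ Metric.infDist o' (affineSpan ℝ {q₁, q₂} : Set V) := by
    haveI := hL2ne.to_subtype
    rw [Metric.infDist_eq_iInf]
    apply le_ciInf
    rintro ⟨x, hx⟩
    show D2 ≤ dist o' x
    have hxv : x -ᵥ q₁ ∈ vectorSpan ℝ ({q₁, q₂} : Set V) := by
      rw [← direction_affineSpan]
      exact AffineSubspace.vsub_mem_direction hx (left_mem_affineSpan_pair ℝ q₁ q₂)
    rw [vectorSpan_pair_rev, Submodule.mem_span_singleton] at hxv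
    obtain ⟨s, hs⟩ := hxv
    have hx' : x - q₁ = s • v := hs.symm
    have hxval : o' - x = w - s • v := by
      calc o' - x = (o' - q₁) - (x - q₁) := by abel
        _ = w - s • v := by rw [ho'w, hx']
    have hd : dist o' x = ‖w - s • v‖ := by rw [dist_eq_norm, hxval]
    rw [hd, hD2]
    have hexp : ‖w - s • v‖^2 = ‖w‖^2 - 2 * (s * ⟪w, v⟫) + s^2 * q2 := by
      rw [norm_sub_sq_real, real_inner_smul_right, norm_smul, mul_pow,
        Real.norm_eq_abs, sq_abs, hq2]
    have hdivle := corner_aux2 ⟪w, v⟫ s q2 hq2pos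
    have hsq : ‖w‖^2 - ⟪w, v⟫^2 / q2 ≤ ‖w - s • v‖^2 := by rw [hexp]; linarith
    calc Real.sqrt (‖w‖^2 - ⟪w, v⟫^2 / q2) ≤ Real.sqrt (‖w - s • v‖^2) :=
          Real.sqrt_le_sqrt hsq
      _ = ‖w - s • v‖ := Real.sqrt_sq (norm_nonneg _)
  -- upper bound for distance to line q₀ q₁
  set r0 : ℝ := ⟪w, u⟫ / p2 with hr0
  set P : V := r0 • u + q₁ with hP
  have hPmem : P ∈ (affineSpan ℝ ({q₀, q₁} : Set V) : Set V) := by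
    rw [Set.pair_comm q₀ q₁]
    have hPe : P = r0 • (q₀ -ᵥ q₁) +ᵥ q₁ := rfl
    rw [hPe]
    exact smul_vsub_vadd_mem_affineSpan_pair r0 q₁ q₀
  have hup : Metric.infDist o' (affineSpan ℝ {q₀, q₁} : Set V) ≤ dist o' P :=
    Metric.infDist_le_dist_of_mem hPmem
  have hnorm : ‖w - r0 • u‖^2 = ‖w‖^2 - ⟪w, u⟫^2 / p2 := by
    rw [norm_sub_sq_real, real_inner_smul_right, norm_smul, mul_pow,
      Real.norm_eq_abs, sq_abs, hr0, hp2]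
    field_simp
    ring
  have hdP : dist o' P = Real.sqrt (‖w‖^2 - ⟪w, u⟫^2 / p2) := by
    have hxval : o' - P = w - r0 • u := by
      calc o' - P = (o' - q₁) - r0 • u := by rw [hP]; abel
        _ = w - r0 • u := by rw [ho'w]
    rw [dist_eq_norm, hxval, ← Real.sqrt_sq (norm_nonneg (w - r0 • u)), hnorm]
  have hfin : Real.sqrt (‖w‖^2 - ⟪w, u⟫^2 / p2) < D2 := by
    apply Real.sqrt_lt_sqrt
    · rw [← hnorm]; positivity
    · rw [hwu, hwv]; linarith [hkey]
  calc Metric.infDist o' (affineSpan ℝ {q₀, q₁} : Set V) ≤ dist o' P := hup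
    _ < D2 := by rw [hdP]; exact hfin
    _ ≤ _ := hlow
end

section
/- Let W₁ and W₂ be closed half-spaces in ℝ³ whose boundary planes Π₁ and Π₂ are distinct and intersect in a line L, and suppose 0 lies in the interior of W₁ ∩ W₂. If the orthogonal projection of 0 onto Π₂ does not lie in the interior of W₁, then dist(0, Π₁) < dist(0, Π₂). (This is the key claim behind the paper's remark on cyclically crossed edges: if an edge of a convex polyhedron is crossed from the face F₁ to the face F₂, then the plane of F₁ is strictly closer to the reference point than the plane of F₂.) -/
open scoped RealInnerProductSpace

/-!
A plane `{x | ⟪n, x⟫ = c}` with `c ≠ 0` is the plane through its foot `p = (c / ‖n‖²) • n`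
orthogonal to `p`, and its distance from `0` is `‖p‖`. Let `p₁`, `p₂` be the feet of `B₁`, `B₂`.
Since `p₂` lies outside the open half-space `⟪p₁, x⟫ < ‖p₁‖²`, we get `‖p₁‖² ≤ ⟪p₁, p₂⟫`, and
`B₁ ≠ B₂` forces `p₁ ≠ p₂`; expanding `0 < ‖p₁ - p₂‖²` then gives `‖p₁‖ < ‖p₂‖`.
-/

section

variable {E : Type*} [NormedAddCommGroup E] [InnerProductSpace ℝ E]

lemma interior_setOf_inner_le {n : E} (hn : n ≠ 0) (c : ℝ) :
    interior {x : E | ⟪n, x⟫ ≤ c} = {x | ⟪n, x⟫ < c} := by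
  have hopen : IsOpenMap (innerSL ℝ n) :=
    (innerSL ℝ n).isOpenMap_of_ne_zero fun h => hn (by simpa using congr($h n))
  have h := hopen.preimage_interior_eq_interior_preimage (innerSL ℝ n).continuous (Set.Iic c)
  rw [interior_Iic] at h
  exact h.symm

def perpHyperplane (p : E) : Set E := {x | ⟪p, x⟫ = ‖p‖ ^ 2}

lemma infDist_zero_perpHyperplane (p : E) : Metric.infDist 0 (perpHyperplane p) = ‖p‖ := by
  have hp : p ∈ perpHyperplane p := real_inner_self_eq_norm_sq p
  refine le_antisymm (by simpa using Metric.infDist_le_dist_of_mem (x := 0) hp) ?_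
  refine (Metric.le_infDist ⟨p, hp⟩).2 fun x hx => ?_
  rw [dist_zero_left]
  rcases (norm_nonneg p).eq_or_lt with h | h
  · rw [← h]; exact norm_nonneg x
  · refine le_of_mul_le_mul_left ?_ h
    rw [← sq, ← hx]
    exact real_inner_le_norm p x

lemma norm_sq_div_norm_sq_smul {n : E} (hn : n ≠ 0) (c : ℝ) :
    ‖(c / ‖n‖ ^ 2) • n‖ ^ 2 = c / ‖n‖ ^ 2 * c := by
  have : ‖n‖ ≠ 0 := norm_ne_zero_iff.mpr hn
  rw [norm_smul, mul_pow, Real.norm_eq_abs, sq_abs]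
  field_simp

lemma setOf_inner_eq_eq_perpHyperplane {n : E} (hn : n ≠ 0) {c : ℝ} (hc : c ≠ 0) :
    {x | ⟪n, x⟫ = c} = perpHyperplane ((c / ‖n‖ ^ 2) • n) := by
  have ht : c / ‖n‖ ^ 2 ≠ 0 := div_ne_zero hc (by positivity)
  ext x
  simp only [perpHyperplane, Set.mem_ofPred_eq, real_inner_smul_left,
    norm_sq_div_norm_sq_smul hn, mul_right_inj' ht]

lemma eq_of_mem_perpHyperplane_of_mem_perpHyperplane {p q : E} (hp : p ∈ perpHyperplane q)
    (hq : q ∈ perpHyperplane p) : p = q := by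
  rw [← sub_eq_zero, ← norm_eq_zero, ← sq_eq_zero_iff, norm_sub_sq_real]
  simp only [perpHyperplane, Set.mem_ofPred_eq] at hp hq
  rw [real_inner_comm] at hp
  linarith

lemma norm_lt_norm_of_norm_sq_le_inner {p q : E} (hpq : p ≠ q) (h : ‖p‖ ^ 2 ≤ ⟪p, q⟫) :
    ‖p‖ < ‖q‖ := by
  have hsub : 0 < ‖p - q‖ ^ 2 := by have := sub_ne_zero.mpr hpq; positivity
  rw [norm_sub_sq_real] at hsub
  exact lt_of_pow_lt_pow_left₀ 2 (norm_nonneg q) (by linarith)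

end

theorem infDist_plane_lt_of_crossed_edge_general
    (n₁ n₂ : EuclideanSpace ℝ (Fin 3)) (c₁ c₂ : ℝ) (hn₁ : n₁ ≠ 0) (hn₂ : n₂ ≠ 0)
    (W₁ W₂ B₁ B₂ : Set (EuclideanSpace ℝ (Fin 3)))
    (hW₁ : W₁ = {x | ⟪n₁, x⟫ ≤ c₁}) (hW₂ : W₂ = {x | ⟪n₂, x⟫ ≤ c₂})
    (hB₁ : B₁ = {x | ⟪n₁, x⟫ = c₁}) (hB₂ : B₂ = {x | ⟪n₂, x⟫ = c₂})
    (hne : B₁ ≠ B₂)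
    (h0 : (0 : EuclideanSpace ℝ (Fin 3)) ∈ interior (W₁ ∩ W₂))
    -- `p₂` is the orthogonal projection of `0` onto `B₂`
    (p₂ : EuclideanSpace ℝ (Fin 3)) (hp₂ : p₂ ∈ B₂)
    (hperp₂ : ∀ x ∈ B₂, ⟪(0 : EuclideanSpace ℝ (Fin 3)) - p₂, x - p₂⟫ = 0)
    (hout : p₂ ∉ interior W₁) :
    Metric.infDist 0 B₁ < Metric.infDist 0 B₂ := by
  rw [interior_inter, hW₁, hW₂, interior_setOf_inner_le hn₁, interior_setOf_inner_le hn₂] at h0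
  obtain ⟨hc₁, hc₂⟩ : 0 < c₁ ∧ 0 < c₂ := by simpa using h0
  rw [hW₁, interior_setOf_inner_le hn₁, Set.mem_ofPred_eq, not_lt] at hout
  set p₁ := (c₁ / ‖n₁‖ ^ 2) • n₁
  set q₂ := (c₂ / ‖n₂‖ ^ 2) • n₂
  have hB₁' : B₁ = perpHyperplane p₁ := hB₁.trans (setOf_inner_eq_eq_perpHyperplane hn₁ hc₁.ne')
  have hB₂' : B₂ = perpHyperplane q₂ := hB₂.trans (setOf_inner_eq_eq_perpHyperplane hn₂ hc₂.ne')
  have hp₂q₂ : p₂ = q₂ := by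
    have hq₂ : q₂ ∈ B₂ := hB₂' ▸ real_inner_self_eq_norm_sq q₂
    refine eq_of_mem_perpHyperplane_of_mem_perpHyperplane (hB₂' ▸ hp₂) ?_
    simpa [perpHyperplane, inner_sub_right, real_inner_self_eq_norm_sq, neg_add_eq_zero]
      using hperp₂ q₂ hq₂
  have hp₁p₂ : p₁ ≠ p₂ := fun h => hne (by rw [hB₁', hB₂', h, hp₂q₂])
  have hp₂_outside : ‖p₁‖ ^ 2 ≤ ⟪p₁, p₂⟫ := by
    rw [norm_sq_div_norm_sq_smul hn₁, real_inner_smul_left]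
    gcongr
  rw [hB₁', hB₂', infDist_zero_perpHyperplane, infDist_zero_perpHyperplane, ← hp₂q₂]
  exact norm_lt_norm_of_norm_sq_le_inner hp₁p₂ hp₂_outside

/-- if `W₁, W₂` are closed half-spaces in `ℝ³` with distinct boundary planes
`B₁, B₂` meeting in a line, `0 ∈ int (W₁ ∩ W₂)`, and the orthogonal projection `p₂` of `0`
onto `B₂` does not lie in the interior of `W₁`, then `B₁` is strictly closer to `0` than
`B₂`. -/
theorem infDist_plane_lt_of_crossed_edge
    (n₁ n₂ : EuclideanSpace ℝ (Fin 3)) (c₁ c₂ : ℝ) (hn₁ : n₁ ≠ 0) (hn₂ : n₂ ≠ 0)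
    (W₁ W₂ B₁ B₂ : Set (EuclideanSpace ℝ (Fin 3)))
    (hW₁ : W₁ = {x | ⟪n₁, x⟫ ≤ c₁}) (hW₂ : W₂ = {x | ⟪n₂, x⟫ ≤ c₂})
    (hB₁ : B₁ = {x | ⟪n₁, x⟫ = c₁}) (hB₂ : B₂ = {x | ⟪n₂, x⟫ = c₂})
    (hne : B₁ ≠ B₂) (hmeet : (B₁ ∩ B₂).Nonempty)
    (h0 : (0 : EuclideanSpace ℝ (Fin 3)) ∈ interior (W₁ ∩ W₂))
    -- `p₂` is the orthogonal projection of `0` onto `B₂`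
    (p₂ : EuclideanSpace ℝ (Fin 3)) (hp₂ : p₂ ∈ B₂)
    (hperp₂ : ∀ x ∈ B₂, ⟪(0 : EuclideanSpace ℝ (Fin 3)) - p₂, x - p₂⟫ = 0)
    (hout : p₂ ∉ interior W₁) :
    Metric.infDist 0 B₁ < Metric.infDist 0 B₂ :=
  infDist_plane_lt_of_crossed_edge_general n₁ n₂ c₁ c₂ hn₁ hn₂ W₁ W₂ B₁ B₂ hW₁ hW₂ hB₁ hB₂ hne h0 p₂
    hp₂ hperp₂ hout
end

section
/- Let W₁ and W₂ be closed half-spaces in ℝ³ whose boundary planes Π₁ and Π₂ are distinct and intersect in a line L, and suppose 0 lies in the interior of W₁ ∩ W₂. Then at least one of the following holds: the orthogonal projection of 0 onto Π₁ lies in the interior of W₂, or the orthogonal projection of 0 onto Π₂ lies in the interior of W₁. (This is the claim in the proof of the extended-gradient theorem that for any edge of a convex polyhedron, the projection of the reference point onto at least one of the two adjacent face planes lies in the corresponding open half-plane.) -/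
open scoped RealInnerProductSpace

lemma interior_hs (n : EuclideanSpace ℝ (Fin 3)) (hn : n ≠ 0) (c : ℝ) :
    interior {x : EuclideanSpace ℝ (Fin 3) | ⟪n, x⟫ ≤ c} = {x | ⟪n, x⟫ < c} := by
  have hsurj : Function.Surjective (innerSL ℝ n) := by
    intro r
    refine ⟨(r / ‖n‖ ^ 2) • n, ?_⟩
    have hnn : ‖n‖ ≠ 0 := norm_ne_zero_iff.2 hn
    show ⟪n, (r / ‖n‖ ^ 2) • n⟫ = r
    rw [real_inner_smul_right, real_inner_self_eq_norm_sq, div_mul_cancel₀]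
    exact pow_ne_zero 2 hnn
  have : ({x : EuclideanSpace ℝ (Fin 3) | ⟪n, x⟫ ≤ c}) = (innerSL ℝ n) ⁻¹' Set.Iic c := rfl
  rw [this, (innerSL ℝ n).interior_preimage hsurj, interior_Iic]
  rfl

lemma proj_span (n p : EuclideanSpace ℝ (Fin 3)) (c : ℝ)
    (hp : ⟪n, p⟫ = c)
    (hperp : ∀ x ∈ {x : EuclideanSpace ℝ (Fin 3) | ⟪n, x⟫ = c},
      ⟪(0 : EuclideanSpace ℝ (Fin 3)) - p, x - p⟫ = 0) :
    ∃ t : ℝ, p = t • n := by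
  have hmem : p ∈ (ℝ ∙ n)ᗮᗮ := by
    intro v hv
    have hvn : ⟪n, v⟫ = 0 := hv n (Submodule.mem_span_singleton_self n)
    have hx : p + v ∈ {x : EuclideanSpace ℝ (Fin 3) | ⟪n, x⟫ = c} := by
      show ⟪n, p + v⟫ = c
      rw [inner_add_right, hvn, hp, add_zero]
    have h := hperp _ hx
    rw [zero_sub, add_sub_cancel_left, inner_neg_left, neg_eq_zero] at h
    rw [real_inner_comm]
    exact h
  rw [Submodule.orthogonal_orthogonal] at hmem
  obtain ⟨t, ht⟩ := Submodule.mem_span_singleton.1 hmem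
  exact ⟨t, ht.symm⟩

/-- if `W₁, W₂` are closed half-spaces in `ℝ³` with distinct boundary planes
`B₁, B₂` meeting in a line, and `0 ∈ int (W₁ ∩ W₂)`, then the orthogonal projection of `0`
onto `B₁` lies in the interior of `W₂`, or the orthogonal projection of `0` onto `B₂`
lies in the interior of `W₁`. -/
theorem proj_mem_interior_of_wedge
    (n₁ n₂ : EuclideanSpace ℝ (Fin 3)) (c₁ c₂ : ℝ) (hn₁ : n₁ ≠ 0) (hn₂ : n₂ ≠ 0)
    (W₁ W₂ B₁ B₂ : Set (EuclideanSpace ℝ (Fin 3)))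
    (hW₁ : W₁ = {x | ⟪n₁, x⟫ ≤ c₁}) (hW₂ : W₂ = {x | ⟪n₂, x⟫ ≤ c₂})
    (hB₁ : B₁ = {x | ⟪n₁, x⟫ = c₁}) (hB₂ : B₂ = {x | ⟪n₂, x⟫ = c₂})
    (hne : B₁ ≠ B₂) (hmeet : (B₁ ∩ B₂).Nonempty)
    (h0 : (0 : EuclideanSpace ℝ (Fin 3)) ∈ interior (W₁ ∩ W₂))
    -- `p₁` and `p₂` are the orthogonal projections of `0` onto `B₁` and `B₂`
    (p₁ p₂ : EuclideanSpace ℝ (Fin 3)) (hp₁ : p₁ ∈ B₁) (hp₂ : p₂ ∈ B₂)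
    (hperp₁ : ∀ x ∈ B₁, ⟪(0 : EuclideanSpace ℝ (Fin 3)) - p₁, x - p₁⟫ = 0)
    (hperp₂ : ∀ x ∈ B₂, ⟪(0 : EuclideanSpace ℝ (Fin 3)) - p₂, x - p₂⟫ = 0) :
    p₁ ∈ interior W₂ ∨ p₂ ∈ interior W₁ := by
  subst hW₁ hW₂ hB₁ hB₂
  rw [interior_inter, interior_hs n₁ hn₁ c₁, interior_hs n₂ hn₂ c₂] at h0
  have hc₁ : 0 < c₁ := by simpa using h0.1
  have hc₂ : 0 < c₂ := by simpa using h0.2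
  obtain ⟨t₁, ht₁⟩ := proj_span n₁ p₁ c₁ hp₁ hperp₁
  obtain ⟨t₂, ht₂⟩ := proj_span n₂ p₂ c₂ hp₂ hperp₂
  set s₁ := ⟪n₁, n₁⟫ with hs₁
  set s₂ := ⟪n₂, n₂⟫ with hs₂
  have hs₁0 : 0 < s₁ := by
    rw [hs₁, real_inner_self_eq_norm_sq]
    have : ‖n₁‖ ≠ 0 := norm_ne_zero_iff.2 hn₁
    positivity
  have hs₂0 : 0 < s₂ := by
    rw [hs₂, real_inner_self_eq_norm_sq]
    have : ‖n₂‖ ≠ 0 := norm_ne_zero_iff.2 hn₂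
    positivity
  have ht₁' : t₁ * s₁ = c₁ := by
    have := hp₁; rw [Set.mem_setOf_eq, ht₁, real_inner_smul_right] at this; linarith
  have ht₂' : t₂ * s₂ = c₂ := by
    have := hp₂; rw [Set.mem_setOf_eq, ht₂, real_inner_smul_right] at this; linarith
  have ht₁pos : 0 < t₁ := by nlinarith
  have ht₂pos : 0 < t₂ := by nlinarith
  by_contra hcon
  push_neg at hcon
  obtain ⟨h₁, h₂⟩ := hcon
  rw [interior_hs n₂ hn₂ c₂, Set.mem_setOf_eq, not_lt, ht₁, real_inner_smul_right] at h₁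
  rw [interior_hs n₁ hn₁ c₁, Set.mem_setOf_eq, not_lt, ht₂, real_inner_smul_right] at h₂
  set a := ⟪n₁, n₂⟫ with ha
  rw [real_inner_comm] at h₁
  -- h₁ : c₂ ≤ t₁ * a,  h₂ : c₁ ≤ t₂ * a
  have hapos : 0 < a := by nlinarith
  have hCS : a * a ≤ s₁ * s₂ := real_inner_mul_inner_self_le n₁ n₂
  have haeq : a * a = s₁ * s₂ := by nlinarith
  have hnorm : a = ‖n₁‖ * ‖n₂‖ := by
    have h1 : s₁ = ‖n₁‖ * ‖n₁‖ := real_inner_self_eq_norm_mul_norm n₁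
    have h2 : s₂ = ‖n₂‖ * ‖n₂‖ := real_inner_self_eq_norm_mul_norm n₂
    have hnn : 0 ≤ ‖n₁‖ * ‖n₂‖ := by positivity
    nlinarith
  have hpar : ‖n₂‖ • n₁ = ‖n₁‖ • n₂ := inner_eq_norm_mul_iff_real.1 hnorm
  have hkey : ∀ y : EuclideanSpace ℝ (Fin 3), ‖n₂‖ * ⟪n₁, y⟫ = ‖n₁‖ * ⟪n₂, y⟫ := by
    intro y
    have h : ⟪‖n₂‖ • n₁, y⟫ = ⟪‖n₁‖ • n₂, y⟫ := by rw [hpar]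
    rw [real_inner_smul_left, real_inner_smul_left] at h
    exact h
  obtain ⟨x, hx₁, hx₂⟩ := hmeet
  rw [Set.mem_setOf_eq] at hx₁ hx₂
  have hc : ‖n₂‖ * c₁ = ‖n₁‖ * c₂ := by rw [← hx₁, ← hx₂]; exact hkey x
  have hn₁' : ‖n₁‖ ≠ 0 := norm_ne_zero_iff.2 hn₁
  have hn₂' : ‖n₂‖ ≠ 0 := norm_ne_zero_iff.2 hn₂
  apply hne
  ext y
  simp only [Set.mem_setOf_eq]
  constructor
  · intro hy
    have := hkey y
    rw [hy] at this
    have : ‖n₁‖ * ⟪n₂, y⟫ = ‖n₁‖ * c₂ := by rw [← this, hc]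
    exact mul_left_cancel₀ hn₁' this
  · intro hy
    have h := hkey y
    rw [hy] at h
    have : ‖n₂‖ * ⟪n₁, y⟫ = ‖n₂‖ * c₁ := by rw [h, ← hc]
    exact mul_left_cancel₀ hn₂' this
end

section
/- Let W₁ and W₂ be closed half-spaces in ℝ³ whose boundary planes Π₁ and Π₂ are distinct and intersect in a line L, and suppose 0 lies in the interior of W₁ ∩ W₂. Let q ∈ L, let oᵢ be the orthogonal projection of 0 onto Πᵢ, and suppose for i = 1, 2 that q − oᵢ is not parallel to L (in particular q ≠ oᵢ). Then it is impossible that both: q + ε₁·(q − o₁) ∈ W₂ for some ε₁ > 0, and q + ε₂·(q − o₂) ∈ W₁ for some ε₂ > 0. (This is the claim in Case 3 of the proof of the extended-gradient theorem that at any boundary point of a convex polyhedron at most one face can have its in-face gradient of the distance function as a tangent vector.) -/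
/-!
Because `0` lies in both half-spaces, the foot `oⱼ` is a nonnegative multiple of the normal `nⱼ`,
so `Wⱼ ⊆ {x | ⟪oⱼ, x - oⱼ⟫ ≤ 0}`. The two tangency conditions therefore give
`⟪o₂, q - o₁⟫ ≤ 0` and `⟪o₁, q - o₂⟫ ≤ 0`, while `⟪oᵢ, q - oᵢ⟫ = 0` because `q` lies on both
planes. Adding the four terms gives `‖o₁ - o₂‖² ≤ 0`; hence `o₁ = o₂` lies on `B₂`, and
`q - o₁` is parallel to `L`.
-/

open scoped RealInnerProductSpace

section InnerProductSpace

variable {E : Type*} [NormedAddCommGroup E] [InnerProductSpace ℝ E]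

theorem foot_eq_div_norm_sq_smul {n o : E} {c : ℝ} (hn : n ≠ 0) (ho : ⟪n, o⟫ = c)
    (hperp : ∀ x, ⟪n, x⟫ = c → ⟪o, x - o⟫ = 0) :
    o = (c / ‖n‖ ^ 2) • n := by
  set p := (c / ‖n‖ ^ 2) • n
  have hp : ⟪n, p⟫ = c := by
    rw [real_inner_smul_right, real_inner_self_eq_norm_sq,
      div_mul_cancel₀ c (pow_ne_zero 2 (norm_ne_zero_iff.mpr hn))]
  have hop : ⟪o, p - o⟫ = 0 := hperp p hp
  have hpo : ⟪p, o - p⟫ = 0 := by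
    rw [real_inner_smul_left, inner_sub_right, ho, hp, sub_self, mul_zero]
  have : ⟪o - p, o - p⟫ = 0 := by
    rw [inner_sub_left, hpo, ← neg_sub p o, inner_neg_right, hop, neg_zero, sub_zero]
  exact sub_eq_zero.mp (inner_self_eq_zero.mp this)

theorem inner_foot_sub_nonpos {n o x : E} {c : ℝ} (hn : n ≠ 0) (hc : 0 ≤ c) (ho : ⟪n, o⟫ = c)
    (hperp : ∀ x, ⟪n, x⟫ = c → ⟪o, x - o⟫ = 0) (hx : ⟪n, x⟫ ≤ c) :
    ⟪o, x - o⟫ ≤ 0 := by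
  rw [foot_eq_div_norm_sq_smul hn ho hperp, real_inner_smul_left, inner_sub_right,
    real_inner_smul_right, real_inner_self_eq_norm_sq,
    div_mul_cancel₀ c (pow_ne_zero 2 (norm_ne_zero_iff.mpr hn))]
  exact mul_nonpos_of_nonneg_of_nonpos (by positivity) (by linarith)

theorem eq_of_inner_sub_nonpos_of_inner_sub_eq_zero {o₁ o₂ q : E}
    (h₁ : ⟪o₁, q - o₁⟫ = 0) (h₂ : ⟪o₂, q - o₂⟫ = 0) (h₁₂ : ⟪o₁, q - o₂⟫ ≤ 0) (h₂₁ : ⟪o₂, q - o₁⟫ ≤ 0) :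
    o₁ = o₂ := by
  have hsum : ‖o₁ - o₂‖ ^ 2 = ⟪o₁, q - o₂⟫ + ⟪o₂, q - o₁⟫ - ⟪o₁, q - o₁⟫ - ⟪o₂, q - o₂⟫ := by
    simp only [← real_inner_self_eq_norm_sq, inner_sub_left, inner_sub_right,
      real_inner_comm o₁ o₂]
    ring
  rw [h₁, h₂] at hsum
  exact sub_eq_zero.mp (norm_eq_zero.mp (pow_eq_zero_iff two_ne_zero |>.mp
    (le_antisymm (by linarith) (sq_nonneg _))))

end InnerProductSpace

theorem not_both_inface_gradients_tangent_general
    (n₁ n₂ : EuclideanSpace ℝ (Fin 3)) (c₁ c₂ : ℝ) (hn₁ : n₁ ≠ 0) (hn₂ : n₂ ≠ 0)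
    (W₁ W₂ B₁ B₂ : Set (EuclideanSpace ℝ (Fin 3)))
    (hW₁ : W₁ = {x | ⟪n₁, x⟫ ≤ c₁}) (hW₂ : W₂ = {x | ⟪n₂, x⟫ ≤ c₂})
    (hB₁ : B₁ = {x | ⟪n₁, x⟫ = c₁}) (hB₂ : B₂ = {x | ⟪n₂, x⟫ = c₂})
    (h0 : (0 : EuclideanSpace ℝ (Fin 3)) ∈ interior (W₁ ∩ W₂))
    (q : EuclideanSpace ℝ (Fin 3)) (hq : q ∈ B₁ ∩ B₂)
    -- `o₁` and `o₂` are the orthogonal projections of `0` onto `B₁` and `B₂`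
    (o₁ o₂ : EuclideanSpace ℝ (Fin 3)) (ho₁ : o₁ ∈ B₁) (ho₂ : o₂ ∈ B₂)
    (hperp₁ : ∀ x ∈ B₁, ⟪(0 : EuclideanSpace ℝ (Fin 3)) - o₁, x - o₁⟫ = 0)
    (hperp₂ : ∀ x ∈ B₂, ⟪(0 : EuclideanSpace ℝ (Fin 3)) - o₂, x - o₂⟫ = 0)
    -- `q - oᵢ` is not parallel to `L`
    (hpar₁ : ⟪n₂, q - o₁⟫ ≠ 0) :
    ¬ ((∃ ε₁ > (0 : ℝ), q + ε₁ • (q - o₁) ∈ W₂) ∧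
       (∃ ε₂ > (0 : ℝ), q + ε₂ • (q - o₂) ∈ W₁)) := by
  subst hW₁ hW₂ hB₁ hB₂
  rintro ⟨⟨ε₁, hε₁, hm₁⟩, ε₂, hε₂, hm₂⟩
  obtain ⟨hc₁, hc₂⟩ : 0 ≤ c₁ ∧ 0 ≤ c₂ := by simpa using interior_subset h0
  simp only [zero_sub, inner_neg_left, neg_eq_zero] at hperp₁ hperp₂
  have hq₁ := hperp₁ q hq.1
  have hq₂ := hperp₂ q hq.2
  have tangent {o o' : EuclideanSpace ℝ (Fin 3)} {ε : ℝ} (hε : 0 < ε)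
      (hq : ⟪o', q - o'⟫ = 0) (hx : ⟪o', q + ε • (q - o) - o'⟫ ≤ 0) : ⟪o', q - o⟫ ≤ 0 := by
    rw [add_sub_right_comm, inner_add_right, hq, zero_add, real_inner_smul_right] at hx
    exact nonpos_of_mul_nonpos_right hx hε
  have h₂₁ := tangent hε₁ hq₂ (inner_foot_sub_nonpos hn₂ hc₂ ho₂ hperp₂ hm₁)
  have h₁₂ := tangent hε₂ hq₁ (inner_foot_sub_nonpos hn₁ hc₁ ho₁ hperp₁ hm₂)
  have ho : o₁ = o₂ := eq_of_inner_sub_nonpos_of_inner_sub_eq_zero hq₁ hq₂ h₁₂ h₂₁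
  exact hpar₁ (by rw [inner_sub_right, hq.2, ho, ho₂.out, sub_self])

/-- let `W₁, W₂` be closed half-spaces in `ℝ³` with distinct boundary planes
`B₁, B₂` meeting in a line `L = B₁ ∩ B₂`, with `0 ∈ int (W₁ ∩ W₂)`. Let `q ∈ L`, let `oᵢ`
be the orthogonal projection of `0` onto `Bᵢ`, and suppose `q - oᵢ` is not parallel to `L`
(expressed as `⟪n₂, q - o₁⟫ ≠ 0` and `⟪n₁, q - o₂⟫ ≠ 0`, since `q - oᵢ` lies in the
direction of `Bᵢ`). Then it is impossible that both in-face gradient directions point into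
the wedge: `q + ε₁ • (q - o₁) ∈ W₂` and `q + ε₂ • (q - o₂) ∈ W₁` for some `ε₁, ε₂ > 0`. -/
theorem not_both_inface_gradients_tangent
    (n₁ n₂ : EuclideanSpace ℝ (Fin 3)) (c₁ c₂ : ℝ) (hn₁ : n₁ ≠ 0) (hn₂ : n₂ ≠ 0)
    (W₁ W₂ B₁ B₂ : Set (EuclideanSpace ℝ (Fin 3)))
    (hW₁ : W₁ = {x | ⟪n₁, x⟫ ≤ c₁}) (hW₂ : W₂ = {x | ⟪n₂, x⟫ ≤ c₂})
    (hB₁ : B₁ = {x | ⟪n₁, x⟫ = c₁}) (hB₂ : B₂ = {x | ⟪n₂, x⟫ = c₂})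
    (hne : B₁ ≠ B₂) (hmeet : (B₁ ∩ B₂).Nonempty)
    (h0 : (0 : EuclideanSpace ℝ (Fin 3)) ∈ interior (W₁ ∩ W₂))
    (q : EuclideanSpace ℝ (Fin 3)) (hq : q ∈ B₁ ∩ B₂)
    -- `o₁` and `o₂` are the orthogonal projections of `0` onto `B₁` and `B₂`
    (o₁ o₂ : EuclideanSpace ℝ (Fin 3)) (ho₁ : o₁ ∈ B₁) (ho₂ : o₂ ∈ B₂)
    (hperp₁ : ∀ x ∈ B₁, ⟪(0 : EuclideanSpace ℝ (Fin 3)) - o₁, x - o₁⟫ = 0)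
    (hperp₂ : ∀ x ∈ B₂, ⟪(0 : EuclideanSpace ℝ (Fin 3)) - o₂, x - o₂⟫ = 0)
    -- `q - oᵢ` is not parallel to `L`
    (hpar₁ : ⟪n₂, q - o₁⟫ ≠ 0) (hpar₂ : ⟪n₁, q - o₂⟫ ≠ 0) :
    ¬ ((∃ ε₁ > (0 : ℝ), q + ε₁ • (q - o₁) ∈ W₂) ∧
       (∃ ε₂ > (0 : ℝ), q + ε₂ • (q - o₂) ∈ W₁)) :=
  not_both_inface_gradients_tangent_general n₁ n₂ c₁ c₂ hn₁ hn₂ W₁ W₂ B₁ B₂ hW₁ hW₂ hB₁ hB₂ h0 q hq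
    o₁ o₂ ho₁ ho₂ hperp₁ hperp₂ hpar₁
end

section
/- Let W₁ and W₂ be closed half-spaces in ℝ³ whose boundary planes Π₁ and Π₂ are distinct and intersect in a line L, with 0 in the interior of W₁ ∩ W₂, and set Aᵢ = Πᵢ ∩ W₃₋ᵢ. Assume the followed-edge condition: for i = 1, 2 the orthogonal projection oᵢ of 0 onto Πᵢ lies in Πᵢ ∩ int(W₃₋ᵢ) (the relative interior of Aᵢ). Let q ∈ L with q ≠ o_L, where o_L is the orthogonal projection of 0 onto L, and set u = (q − o_L)/‖q − o_L‖. Then ⟪q, u⟫ = ‖q − o_L‖ > 0, q + t·u ∈ L ⊆ A₁ ∪ A₂ for all t ≥ 0, and every unit vector v ≠ u for which there exists ε > 0 with q + t·v ∈ A₁ ∪ A₂ for all t ∈ [0, ε] satisfies ⟪q, v⟫ < ⟪q, u⟫. (This establishes that on a followed edge the unique direction of steepest ascent of the radial distance function is along the edge, away from the foot point o_L.) -/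
open scoped RealInnerProductSpace
open Submodule

/-! Along a direction `v` the radial function `‖·‖` changes at a rate proportional to
`⟪q, v⟫ = ⟪o_L, v⟫ + ⟪q - o_L, v⟫`. For a unit `v ≠ u` the second term is `< ‖q - o_L‖`
by strict Cauchy–Schwarz. Since `o_L ⊥ L`, we have `o_L = a n₁ + b n₂`, and the followed-edge
condition makes `a, b > 0`: e.g. `o_L - o₁` lies in the direction of `B₁` and has
`⟪n₂, o_L - o₁⟫ > 0`. A direction `v` that stays in `A₁ ∪ A₂ ⊆ W₁ ∩ W₂` has `⟪nᵢ, v⟫ ≤ 0`,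
hence `⟪o_L, v⟫ ≤ 0`. -/

variable {E : Type*} [NormedAddCommGroup E] [InnerProductSpace ℝ E]

lemma inner_lt_of_mem_interior_setOf_inner_le {n x : E} {c : ℝ} (hn : n ≠ 0)
    (hx : x ∈ interior {y | ⟪n, y⟫ ≤ c}) : ⟪n, x⟫ < c := by
  have hf : innerSL ℝ n ≠ 0 := by
    rwa [ne_eq, ← norm_eq_zero, innerSL_apply_norm, norm_eq_zero]
  have := ((innerSL ℝ n).isOpenMap_of_ne_zero hf).preimage_interior_eq_interior_preimage
    (innerSL ℝ n).continuous (Set.Iic c)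
  rw [interior_Iic] at this
  exact (this ▸ hx : x ∈ innerSL ℝ n ⁻¹' Set.Iio c)

lemma inner_nonpos_of_add_smul_mem_setOf_inner_le {n q v : E} {c ε : ℝ} (hq : ⟪n, q⟫ = c)
    (hε : 0 < ε) (h : ⟪n, q + ε • v⟫ ≤ c) : ⟪n, v⟫ ≤ 0 := by
  rw [inner_add_right, real_inner_smul_right, hq] at h
  exact nonpos_of_mul_nonpos_right (by linarith) hε

/-- The foot `o` of the perpendicular from `0` to a set `S` containing `o + sᗮ` lies in
`span s`. -/
lemma mem_span_of_forall_inner_sub_eq_zero {s S : Set E} (hs : s.Finite) {o : E}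
    (hS : ∀ w, (∀ n ∈ s, ⟪n, w⟫ = 0) → o + w ∈ S)
    (hperp : ∀ x ∈ S, ⟪(0 : E) - o, x - o⟫ = 0) : o ∈ span ℝ s := by
  have := FiniteDimensional.span_of_finite ℝ hs
  rw [← orthogonal_orthogonal (span ℝ s), mem_orthogonal']
  intro w hw
  have h := hperp (o + w) (hS w fun n hn => inner_right_of_mem_orthogonal (subset_span hn) hw)
  rwa [add_sub_cancel_left, zero_sub, inner_neg_left, neg_eq_zero] at h

/-- The coefficient of `y` is read off from `‖q - p‖² = b ⟪y, q - p⟫`. -/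
lemma pos_of_inner_lt_of_mem_span_singleton {x y p q : E} {a b : ℝ} (hp : p ∈ span ℝ {x})
    (hq : q = a • x + b • y) (hx : ⟪x, p⟫ = ⟪x, q⟫) (hy : ⟪y, p⟫ < ⟪y, q⟫) : 0 < b := by
  obtain ⟨s, rfl⟩ := mem_span_singleton.mp hp
  have hxw : ⟪x, q - s • x⟫ = 0 := by rw [inner_sub_right]; linarith
  have hyw : 0 < ⟪y, q - s • x⟫ := by rw [inner_sub_right]; linarith
  set w := q - s • x with hw_def
  have hw : w ≠ 0 := fun h => by simp [h] at hyw
  have hw_eq : w = (a - s) • x + b • y := by rw [hw_def, hq]; module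
  have hnorm : ⟪w, w⟫ = b * ⟪y, w⟫ := by
    nth_rewrite 1 [hw_eq]
    rw [inner_add_left, real_inner_smul_left, real_inner_smul_left, hxw, mul_zero, zero_add]
  exact pos_of_mul_pos_left (hnorm ▸ real_inner_self_pos.mpr hw) hyw.le

lemma inner_lt_norm_of_ne_inv_norm_smul {d v : E} (hd : d ≠ 0) (hv : ‖v‖ = 1)
    (hvd : v ≠ ‖d‖⁻¹ • d) : ⟪d, v⟫ < ‖d‖ := by
  have h := (inner_lt_norm_mul_iff_real (x := d) (y := v)).mpr
  rw [hv, mul_one, one_smul] at h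
  refine h fun h' => hvd ?_
  rw [eq_inv_smul_iff₀ (norm_ne_zero_iff.mpr hd), ← h']

lemma inner_inv_norm_smul_sub_eq_norm {p q : E} (hp : ⟪p, q - p⟫ = 0) :
    ⟪q, ‖q - p‖⁻¹ • (q - p)⟫ = ‖q - p‖ := by
  have hq : ⟪q, q - p⟫ = ‖q - p‖ ^ 2 := by
    rw [← real_inner_self_eq_norm_sq, inner_sub_left _ p, hp, sub_zero]
  rcases eq_or_ne ‖q - p‖ 0 with h | h
  · simp [h]
  · rw [real_inner_smul_right, hq]; field_simp

theorem followed_edge_steepest_ascent_general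
    (n₁ n₂ : EuclideanSpace ℝ (Fin 3)) (c₁ c₂ : ℝ) (hn₁ : n₁ ≠ 0) (hn₂ : n₂ ≠ 0)
    (W₁ W₂ B₁ B₂ A₁ A₂ : Set (EuclideanSpace ℝ (Fin 3)))
    (hW₁ : W₁ = {x | ⟪n₁, x⟫ ≤ c₁}) (hW₂ : W₂ = {x | ⟪n₂, x⟫ ≤ c₂})
    (hB₁ : B₁ = {x | ⟪n₁, x⟫ = c₁}) (hB₂ : B₂ = {x | ⟪n₂, x⟫ = c₂})
    (hA₁ : A₁ = B₁ ∩ W₂) (hA₂ : A₂ = B₂ ∩ W₁)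
    -- `o₁`, `o₂` are the orthogonal projections of `0` onto `B₁`, `B₂`
    (o₁ o₂ : EuclideanSpace ℝ (Fin 3)) (ho₁ : o₁ ∈ B₁) (ho₂ : o₂ ∈ B₂)
    (hperp₁ : ∀ x ∈ B₁, ⟪(0 : EuclideanSpace ℝ (Fin 3)) - o₁, x - o₁⟫ = 0)
    (hperp₂ : ∀ x ∈ B₂, ⟪(0 : EuclideanSpace ℝ (Fin 3)) - o₂, x - o₂⟫ = 0)
    -- the followed-edge condition: each `oᵢ` lies in the relative interior of `Aᵢ`
    (hfollow₁ : o₁ ∈ B₁ ∩ interior W₂) (hfollow₂ : o₂ ∈ B₂ ∩ interior W₁)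
    -- `o_L` is the orthogonal projection of `0` onto the line `L = B₁ ∩ B₂`
    (oL : EuclideanSpace ℝ (Fin 3)) (hoL : oL ∈ B₁ ∩ B₂)
    (hperpL : ∀ x ∈ B₁ ∩ B₂, ⟪(0 : EuclideanSpace ℝ (Fin 3)) - oL, x - oL⟫ = 0)
    (q : EuclideanSpace ℝ (Fin 3)) (hq : q ∈ B₁ ∩ B₂) (hqoL : q ≠ oL)
    (u : EuclideanSpace ℝ (Fin 3)) (hu : u = ‖q - oL‖⁻¹ • (q - oL)) :
    ⟪q, u⟫ = ‖q - oL‖ ∧ 0 < ‖q - oL‖ ∧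
    (∀ t : ℝ, 0 ≤ t → q + t • u ∈ B₁ ∩ B₂) ∧ B₁ ∩ B₂ ⊆ A₁ ∪ A₂ ∧
    (∀ v : EuclideanSpace ℝ (Fin 3), ‖v‖ = 1 → v ≠ u →
      (∃ ε > (0 : ℝ), ∀ t ∈ Set.Icc (0 : ℝ) ε, q + t • v ∈ A₁ ∪ A₂) →
      ⟪q, v⟫ < ⟪q, u⟫) := by
  subst hW₁ hW₂ hB₁ hB₂ hA₁ hA₂
  obtain ⟨hq₁, hq₂⟩ : ⟪n₁, q⟫ = c₁ ∧ ⟪n₂, q⟫ = c₂ := hq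
  obtain ⟨hoL₁, hoL₂⟩ : ⟪n₁, oL⟫ = c₁ ∧ ⟪n₂, oL⟫ = c₂ := hoL
  have hd : q - oL ≠ 0 := sub_ne_zero.mpr hqoL
  have hqu : ⟪q, u⟫ = ‖q - oL‖ :=
    hu ▸ inner_inv_norm_smul_sub_eq_norm (by simpa using hperpL q ⟨hq₁, hq₂⟩)
  have ho₁_span : o₁ ∈ span ℝ {n₁} := mem_span_of_forall_inner_sub_eq_zero
    (Set.finite_singleton n₁) (fun w hw => by simp_all [inner_add_right]) hperp₁
  have ho₂_span : o₂ ∈ span ℝ {n₂} := mem_span_of_forall_inner_sub_eq_zero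
    (Set.finite_singleton n₂) (fun w hw => by simp_all [inner_add_right]) hperp₂
  obtain ⟨a, b, hab⟩ := mem_span_pair.mp <| mem_span_of_forall_inner_sub_eq_zero
    (Set.toFinite {n₁, n₂}) (fun w hw => by simp_all [inner_add_right]) hperpL
  have ho₁_lt : ⟪n₂, o₁⟫ < c₂ := inner_lt_of_mem_interior_setOf_inner_le hn₂ hfollow₁.2
  have ho₂_lt : ⟪n₁, o₂⟫ < c₁ := inner_lt_of_mem_interior_setOf_inner_le hn₁ hfollow₂.2
  have hb : 0 < b := pos_of_inner_lt_of_mem_span_singleton ho₁_span hab.symm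
    (ho₁.trans hoL₁.symm) (ho₁_lt.trans_eq hoL₂.symm)
  have ha : 0 < a := pos_of_inner_lt_of_mem_span_singleton ho₂_span (by rw [← hab, add_comm])
    (ho₂.trans hoL₂.symm) (ho₂_lt.trans_eq hoL₁.symm)
  refine ⟨hqu, norm_pos_iff.mpr hd, fun t _ => ?_, fun x hx => Or.inl ⟨hx.1, hx.2.le⟩, ?_⟩
  · simp [hu, inner_add_right, inner_smul_right, inner_sub_right, hq₁, hq₂, hoL₁, hoL₂]
  rintro v hv hvu ⟨ε, hε, hmem⟩
  have hW : ⟪n₁, q + ε • v⟫ ≤ c₁ ∧ ⟪n₂, q + ε • v⟫ ≤ c₂ := by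
    rcases hmem ε ⟨hε.le, le_rfl⟩ with ⟨h₁, h₂⟩ | ⟨h₂, h₁⟩
    exacts [⟨h₁.le, h₂⟩, ⟨h₁, h₂.le⟩]
  have hv₁ : ⟪n₁, v⟫ ≤ 0 := inner_nonpos_of_add_smul_mem_setOf_inner_le hq₁ hε hW.1
  have hv₂ : ⟪n₂, v⟫ ≤ 0 := inner_nonpos_of_add_smul_mem_setOf_inner_le hq₂ hε hW.2
  have hoLv : ⟪oL, v⟫ ≤ 0 := by
    rw [← hab, inner_add_left, real_inner_smul_left, real_inner_smul_left]
    exact add_nonpos (mul_nonpos_of_nonneg_of_nonpos ha.le hv₁)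
      (mul_nonpos_of_nonneg_of_nonpos hb.le hv₂)
  calc ⟪q, v⟫ = ⟪oL, v⟫ + ⟪q - oL, v⟫ := by rw [inner_sub_left]; ring
    _ < ‖q - oL‖ := by linarith [inner_lt_norm_of_ne_inv_norm_smul hd hv (hu ▸ hvu)]
    _ = ⟪q, u⟫ := hqu.symm

/-- on a followed edge, the unique direction of steepest ascent of the
radial distance function is along the edge line `L = B₁ ∩ B₂`, away from the foot point
`o_L` of the perpendicular from `0` to `L`. -/
theorem followed_edge_steepest_ascent
    (n₁ n₂ : EuclideanSpace ℝ (Fin 3)) (c₁ c₂ : ℝ) (hn₁ : n₁ ≠ 0) (hn₂ : n₂ ≠ 0)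
    (W₁ W₂ B₁ B₂ A₁ A₂ : Set (EuclideanSpace ℝ (Fin 3)))
    (hW₁ : W₁ = {x | ⟪n₁, x⟫ ≤ c₁}) (hW₂ : W₂ = {x | ⟪n₂, x⟫ ≤ c₂})
    (hB₁ : B₁ = {x | ⟪n₁, x⟫ = c₁}) (hB₂ : B₂ = {x | ⟪n₂, x⟫ = c₂})
    (hA₁ : A₁ = B₁ ∩ W₂) (hA₂ : A₂ = B₂ ∩ W₁)
    (hne : B₁ ≠ B₂) (hmeet : (B₁ ∩ B₂).Nonempty)
    (h0 : (0 : EuclideanSpace ℝ (Fin 3)) ∈ interior (W₁ ∩ W₂))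
    -- `o₁`, `o₂` are the orthogonal projections of `0` onto `B₁`, `B₂`
    (o₁ o₂ : EuclideanSpace ℝ (Fin 3)) (ho₁ : o₁ ∈ B₁) (ho₂ : o₂ ∈ B₂)
    (hperp₁ : ∀ x ∈ B₁, ⟪(0 : EuclideanSpace ℝ (Fin 3)) - o₁, x - o₁⟫ = 0)
    (hperp₂ : ∀ x ∈ B₂, ⟪(0 : EuclideanSpace ℝ (Fin 3)) - o₂, x - o₂⟫ = 0)
    -- the followed-edge condition: each `oᵢ` lies in the relative interior of `Aᵢ`
    (hfollow₁ : o₁ ∈ B₁ ∩ interior W₂) (hfollow₂ : o₂ ∈ B₂ ∩ interior W₁)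
    -- `o_L` is the orthogonal projection of `0` onto the line `L = B₁ ∩ B₂`
    (oL : EuclideanSpace ℝ (Fin 3)) (hoL : oL ∈ B₁ ∩ B₂)
    (hperpL : ∀ x ∈ B₁ ∩ B₂, ⟪(0 : EuclideanSpace ℝ (Fin 3)) - oL, x - oL⟫ = 0)
    (q : EuclideanSpace ℝ (Fin 3)) (hq : q ∈ B₁ ∩ B₂) (hqoL : q ≠ oL)
    (u : EuclideanSpace ℝ (Fin 3)) (hu : u = ‖q - oL‖⁻¹ • (q - oL)) :
    ⟪q, u⟫ = ‖q - oL‖ ∧ 0 < ‖q - oL‖ ∧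
    (∀ t : ℝ, 0 ≤ t → q + t • u ∈ B₁ ∩ B₂) ∧ B₁ ∩ B₂ ⊆ A₁ ∪ A₂ ∧
    (∀ v : EuclideanSpace ℝ (Fin 3), ‖v‖ = 1 → v ≠ u →
      (∃ ε > (0 : ℝ), ∀ t ∈ Set.Icc (0 : ℝ) ε, q + t • v ∈ A₁ ∪ A₂) →
      ⟪q, v⟫ < ⟪q, u⟫) :=
  followed_edge_steepest_ascent_general n₁ n₂ c₁ c₂ hn₁ hn₂ W₁ W₂ B₁ B₂ A₁ A₂ hW₁ hW₂ hB₁ hB₂ hA₁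
    hA₂ o₁ o₂ ho₁ ho₂ hperp₁ hperp₂ hfollow₁ hfollow₂ oL hoL hperpL q hq hqoL u hu
end

section
/- Let P ⊆ ℝ³ be a convex polyhedron with 0 in its interior, let q ∈ ∂P, and let w be a unit vector for which there exists ε > 0 with q + t·w ∈ P for all t ∈ [0, ε]. Then there exists a boundary-tangent direction v of P at q (a unit vector with q + t·v ∈ ∂P for all small t ≥ 0) such that ⟪q, v⟫ ≥ ⟪q, w⟫. (This is the step used in the uniqueness argument for the extended gradient: the maximum of the one-sided directional derivative of the radial distance over the full tangent cone of P at q is attained at a direction tangent to the boundary.) -/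
/-!
The radial projection `x t = (gauge P (q + t • w))⁻¹ • (q + t • w)` of the inward segment lies
on `∂P` and tends to `q` as `t → 0⁺`. The frontier is covered by the finitely many closed faces
`convexHull T ⊆ ∂P` with `T ⊆ S`, so for small `t` the point `x t` lies in a face that also
contains `q`, and the segment `[q, x t]` lies in `∂P`. Its direction is a nonnegative combination
`α • w + β • q` (with `β ≥ 0` because `gauge P (q + t • w) ≤ 1`), and moving `w` towards `q`
can only increase `⟪q, ·⟫` on the unit sphere. If `w` is parallel to `q`, it points to `-q`, so
`⟪q, w⟫ = -‖q‖` is minimal and any boundary-tangent direction works; one is obtained from an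
interior point off the line `ℝ ∙ q`, which exists because the dimension is at least two.
-/

open scoped RealInnerProductSpace

open Set Filter Topology

section ExposedFace

variable {E : Type*} [AddCommGroup E] [Module ℝ E]

theorem mem_convexHull_sep_eq_of_le {S : Set E} {f : E →ₗ[ℝ] ℝ} {y : E}
    (hy : y ∈ convexHull ℝ S) (hf : ∀ s ∈ S, f s ≤ f y) :
    y ∈ convexHull ℝ {s ∈ S | f s = f y} := by
  classical
  obtain ⟨ι, _, w, z, hw₀, hw₁, hz, hyz⟩ := mem_convexHull_iff_exists_fintype.1 hy
  have hdefect : ∑ i, w i * (f y - f (z i)) = 0 := by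
    have hfy : ∑ i, w i * f (z i) = f y := by
      simp only [← hyz, map_sum, map_smul, smul_eq_mul]
    simp only [mul_sub, Finset.sum_sub_distrib, ← Finset.sum_mul, hw₁, one_mul, hfy, sub_self]
  have hface : ∀ i, w i ≠ 0 → f (z i) = f y := by
    intro i hi
    have h := (Finset.sum_eq_zero_iff_of_nonneg fun j _ =>
      mul_nonneg (hw₀ j) (sub_nonneg.2 (hf _ (hz j)))).1 hdefect i (Finset.mem_univ i)
    linarith [(mul_eq_zero.1 h).resolve_left hi]
  have hmem : (Finset.univ.filter (w · ≠ 0)).centerMass w z ∈ convexHull ℝ {s ∈ S | f s = f y} :=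
    Finset.centerMass_mem_convexHull _ (fun i _ => hw₀ i)
      (by rw [Finset.sum_filter_ne_zero, hw₁]; exact one_pos)
      fun i hi => ⟨hz i, hface i (Finset.mem_filter.1 hi).2⟩
  rwa [Finset.centerMass_filter_ne_zero, Finset.centerMass_eq_of_sum_1 _ _ hw₁, hyz] at hmem

end ExposedFace

section Polytope

variable {E : Type*} [NormedAddCommGroup E] [NormedSpace ℝ E]

theorem Convex.exists_forall_le_forall_interior_lt {P : Set E} (hP : Convex ℝ P)
    (hint : (interior P).Nonempty) {y : E} (hy : y ∉ interior P) :
    ∃ f : StrongDual ℝ E, (∀ p ∈ P, f p ≤ f y) ∧ ∀ p ∈ interior P, f p < f y := by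
  obtain ⟨f, hf⟩ := geometric_hahn_banach_open_point hP.interior isOpen_interior hy
  refine ⟨f, fun p hp => ?_, hf⟩
  have hP_sub : P ⊆ closure (interior P) :=
    hP.closure_interior_eq_closure_of_nonempty_interior hint ▸ subset_closure
  exact closure_minimal (fun x hx => (hf x hx).le) (isClosed_le f.continuous continuous_const)
    (hP_sub hp)

theorem exists_subset_mem_convexHull_subset_frontier_s13 {S : Set E}
    (hint : (interior (convexHull ℝ S)).Nonempty) {y : E} (hy : y ∈ convexHull ℝ S)
    (hy' : y ∉ interior (convexHull ℝ S)) :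
    ∃ T ⊆ S, y ∈ convexHull ℝ T ∧ convexHull ℝ T ⊆ frontier (convexHull ℝ S) := by
  obtain ⟨f, hle, hlt⟩ := (convex_convexHull ℝ S).exists_forall_le_forall_interior_lt hint hy'
  refine ⟨{s ∈ S | f s = f y}, sep_subset _ _,
    mem_convexHull_sep_eq_of_le (f := f.toLinearMap) hy
      fun s hs => hle s (subset_convexHull ℝ S hs), fun z hz => ⟨?_, fun hzi => ?_⟩⟩
  · exact subset_closure (convexHull_mono (sep_subset _ _) hz)
  · have hfz : f z = f y :=
      convexHull_min (fun s hs => hs.2) (convex_hyperplane f.toLinearMap.isLinear _) hz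
    exact (hlt z hzi).ne hfz

theorem eventually_nhds_exists_convexHull_subset_frontier {S : Set E} (hS : S.Finite)
    (hint : (interior (convexHull ℝ S)).Nonempty) (q : E) :
    ∀ᶠ x in 𝓝 q, x ∈ frontier (convexHull ℝ S) → ∃ T ⊆ S, q ∈ convexHull ℝ T ∧
      x ∈ convexHull ℝ T ∧ convexHull ℝ T ⊆ frontier (convexHull ℝ S) := by
  have havoid : ∀ᶠ x in 𝓝 q, ∀ T ∈ {T | T ⊆ S}, q ∉ convexHull ℝ T → x ∉ convexHull ℝ T := by
    refine (eventually_all_finite hS.finite_subsets).2 fun T hT => ?_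
    by_cases hqT : q ∈ convexHull ℝ T
    · exact Eventually.of_forall fun _ h => absurd hqT h
    · filter_upwards [((hS.subset hT).isCompact_convexHull ℝ).isClosed.isOpen_compl.mem_nhds hqT]
        with x hx _ using hx
  filter_upwards [havoid] with x hx hxF
  have hclosed := (hS.isCompact_convexHull ℝ).isClosed
  obtain ⟨T, hTS, hxT, hTF⟩ :=
    exists_subset_mem_convexHull_subset_frontier_s13 hint (hclosed.frontier_subset hxF) hxF.2
  exact ⟨T, hTS, not_not.1 fun hqT => hx T hTS hqT hxT, hxT, hTF⟩

theorem inv_gauge_smul_mem_frontier {P : Set E} (hP : Convex ℝ P) (h0 : P ∈ 𝓝 0)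
    (hb : Bornology.IsBounded P) {x : E} (hx : x ≠ 0) : (gauge P x)⁻¹ • x ∈ frontier P := by
  have hpos : 0 < gauge P x :=
    (gauge_pos (absorbent_nhds_zero h0) ((NormedSpace.isVonNBounded_iff ℝ).2 hb)).2 hx
  rw [← gauge_eq_one_iff_mem_frontier hP h0, gauge_smul_of_nonneg (inv_nonneg.2 hpos.le),
    smul_eq_mul, inv_mul_cancel₀ hpos.ne']

theorem tendsto_inv_gauge_smul_nhds {P : Set E} (hP : Convex ℝ P) (h0 : P ∈ 𝓝 0) {q : E}
    (hq : q ∈ frontier P) : Tendsto (fun x => (gauge P x)⁻¹ • x) (𝓝 q) (𝓝 q) := by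
  have hg : gauge P q = 1 := (gauge_eq_one_iff_mem_frontier hP h0).2 hq
  have := ((continuous_gauge hP h0).continuousAt.fun_inv₀ (by simp [hg])).fun_smul
    (continuousAt_id (x := q))
  simpa [ContinuousAt, hg] using this

def IsBoundaryTangentDirection (P : Set E) (q v : E) : Prop :=
  ‖v‖ = 1 ∧ ∃ ε > (0 : ℝ), ∀ t ∈ Icc (0 : ℝ) ε, q + t • v ∈ frontier P

theorem isBoundaryTangentDirection_inv_norm_smul {P : Set E} {q u : E} (hu : u ≠ 0)
    (h : segment ℝ q (q + u) ⊆ frontier P) : IsBoundaryTangentDirection P q (‖u‖⁻¹ • u) := by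
  have hpos : 0 < ‖u‖ := norm_pos_iff.2 hu
  refine ⟨norm_smul_inv_norm hu, ‖u‖, hpos, fun t ht => h ?_⟩
  rw [segment_eq_image']
  refine ⟨‖u‖⁻¹ * t, ⟨by have := ht.1; positivity, ?_⟩, by simp [smul_smul, mul_comm]⟩
  rw [inv_mul_le_one₀ hpos]
  exact ht.2

theorem exists_isBoundaryTangentDirection_smul_add_smul {S : Set E} (hS : S.Finite)
    (h0 : (0 : E) ∈ interior (convexHull ℝ S)) {q d : E} (hq : q ∈ frontier (convexHull ℝ S))
    (hd : q + d ∈ convexHull ℝ S) (hdq : d ∉ ℝ ∙ q) :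
    ∃ α ≥ (0 : ℝ), ∃ β ≥ (0 : ℝ),
      IsBoundaryTangentDirection (convexHull ℝ S) q (α • d + β • q) := by
  set P := convexHull ℝ S
  have hP : Convex ℝ P := convex_convexHull ℝ S
  have hP0 : P ∈ 𝓝 0 := mem_interior_iff_mem_nhds.1 h0
  have hPb : Bornology.IsBounded P := (hS.isCompact_convexHull ℝ).isBounded
  have hindep : ∀ a b : ℝ, a ≠ 0 → a • d + b • q ≠ 0 := fun a b ha h =>
    hdq ((Submodule.smul_mem_iff _ ha).1 (eq_neg_of_add_eq_zero_left h ▸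
      neg_mem (Submodule.smul_mem _ b (Submodule.mem_span_singleton_self q))))
  have hne : ∀ t : ℝ, t ≠ 0 → q + t • d ≠ 0 := fun t ht => by
    simpa [add_comm] using hindep t 1 ht
  set x : ℝ → E := fun t => (gauge P (q + t • d))⁻¹ • (q + t • d)
  have hx : Tendsto x (𝓝[>] 0) (𝓝 q) := by
    refine (tendsto_inv_gauge_smul_nhds hP hP0 hq).comp (tendsto_nhdsWithin_of_tendsto_nhds ?_)
    exact (by fun_prop : Continuous fun t : ℝ => q + t • d).tendsto' 0 q (by simp)
  obtain ⟨t, hface, ht0, ht1⟩ := ((hx.eventually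
    (eventually_nhds_exists_convexHull_subset_frontier hS ⟨0, h0⟩ q)).and
    (Ioc_mem_nhdsGT one_pos)).exists
  obtain ⟨T, -, hqT, hxT, hTF⟩ := hface (inv_gauge_smul_mem_frontier hP hP0 hPb (hne t ht0.ne'))
  set γ := gauge P (q + t • d)
  have hγ0 : 0 < γ := (gauge_pos (absorbent_nhds_zero hP0)
    ((NormedSpace.isVonNBounded_iff ℝ).2 hPb)).2 (hne t ht0.ne')
  have hγ1 : γ ≤ 1 := gauge_le_one_of_mem
    (hP.add_smul_mem ((hS.isCompact_convexHull ℝ).isClosed.frontier_subset hq) hd ⟨ht0.le, ht1⟩)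
  set u := (γ⁻¹ * t) • d + (γ⁻¹ * (1 - γ)) • q
  have hu : u ≠ 0 := hindep _ _ (by positivity)
  have hxt : x t = q + u := by
    change γ⁻¹ • (q + t • d) = q + u
    match_scalars
    · field_simp
      ring
    · ring
  refine ⟨‖u‖⁻¹ * (γ⁻¹ * t), by positivity, ‖u‖⁻¹ * (γ⁻¹ * (1 - γ)),
    mul_nonneg (by positivity) (mul_nonneg (by positivity) (by linarith)), ?_⟩
  have hv := isBoundaryTangentDirection_inv_norm_smul hu
    (hxt ▸ ((convex_convexHull ℝ T).segment_subset hqT hxT).trans hTF)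
  rwa [smul_add, smul_smul, smul_smul] at hv

end Polytope

section InnerProduct

variable {F : Type*} [NormedAddCommGroup F] [InnerProductSpace ℝ F]

theorem real_inner_le_real_inner_smul_add_smul {q w : F} (hw : ‖w‖ = 1) {α β : ℝ}
    (hv : ‖α • w + β • q‖ = 1) (hα : 0 ≤ α) (hβ : 0 ≤ β) : ⟪q, w⟫ ≤ ⟪q, α • w + β • q⟫ := by
  have hexp : ⟪q, α • w + β • q⟫ = α * ⟪q, w⟫ + β * ‖q‖ ^ 2 := by
    rw [inner_add_right, real_inner_smul_right, real_inner_smul_right, real_inner_self_eq_norm_sq]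
  have hcs := abs_le.1 (by simpa [hw] using abs_real_inner_le_norm q w)
  rw [hexp]
  rcases le_or_gt 0 ⟪q, w⟫ with hc | hc
  · have h1 : 1 ≤ α + β * ‖q‖ := by
      calc 1 = ‖α • w + β • q‖ := hv.symm
        _ ≤ ‖α • w‖ + ‖β • q‖ := norm_add_le _ _
        _ = α + β * ‖q‖ := by
          rw [norm_smul, norm_smul, hw, Real.norm_of_nonneg hα, Real.norm_of_nonneg hβ, mul_one]
    nlinarith [mul_le_mul_of_nonneg_left h1 hc, mul_nonneg hβ (norm_nonneg q)]
  · have h1 : α + β * ⟪q, w⟫ ≤ 1 := by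
      calc α + β * ⟪q, w⟫ = ⟪w, α • w + β • q⟫ := by
            rw [inner_add_right, real_inner_smul_right, real_inner_smul_right,
              real_inner_self_eq_norm_sq, hw, real_inner_comm]
            ring
        _ ≤ ‖w‖ * ‖α • w + β • q‖ := real_inner_le_norm _ _
        _ = 1 := by rw [hw, hv, one_mul]
    have hsq : 0 ≤ (‖q‖ - ⟪q, w⟫) * (‖q‖ + ⟪q, w⟫) :=
      mul_nonneg (by linarith) (by linarith)
    nlinarith [mul_le_mul_of_nonpos_left h1 hc.le, mul_nonneg hβ hsq]

theorem real_inner_eq_neg_norm_of_mem_span_singleton {P : Set F} (hP : Convex ℝ P)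
    (h0 : P ∈ 𝓝 0) {q w : F} (hq : q ∈ frontier P) (hw : ‖w‖ = 1) (hwq : w ∈ ℝ ∙ q) {ε : ℝ}
    (hε : 0 < ε) (hεw : q + ε • w ∈ P) : ⟪q, w⟫ = -‖q‖ := by
  obtain ⟨k, rfl⟩ := Submodule.mem_span_singleton.1 hwq
  have hk : k ≤ 0 := by
    by_contra! hk
    have h1 := gauge_le_one_of_mem hεw
    rw [show q + ε • k • q = (1 + ε * k) • q by module, gauge_smul_of_nonneg (by positivity),
      (gauge_eq_one_iff_mem_frontier hP h0).2 hq, smul_eq_mul, mul_one] at h1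
    nlinarith
  have hkq : -k * ‖q‖ = 1 := by rw [← hw, norm_smul, Real.norm_of_nonpos hk]
  rw [real_inner_smul_right, real_inner_self_eq_norm_sq]
  linear_combination -‖q‖ * hkq

theorem exists_isBoundaryTangentDirection_real_inner_le {S : Set F} (hS : S.Finite)
    (h0 : (0 : F) ∈ interior (convexHull ℝ S)) {q : F} (hq : q ∈ frontier (convexHull ℝ S))
    (hline : ℝ ∙ q ≠ ⊤) {w : F} (hw : ‖w‖ = 1) {ε : ℝ} (hε : 0 < ε)
    (hεw : q + ε • w ∈ convexHull ℝ S) :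
    ∃ v, IsBoundaryTangentDirection (convexHull ℝ S) q v ∧ ⟪q, w⟫ ≤ ⟪q, v⟫ := by
  by_cases hwq : w ∈ ℝ ∙ q
  · obtain ⟨p, hp, hpq⟩ : ∃ p ∈ interior (convexHull ℝ S), p ∉ ℝ ∙ q := by
      by_contra! h
      exact hline (Submodule.eq_top_of_nonempty_interior' _
        ⟨0, interior_mono h (by rwa [interior_interior])⟩)
    obtain ⟨α, -, β, -, hv⟩ := exists_isBoundaryTangentDirection_smul_add_smul hS h0 hq
      (d := p - q) (by rw [add_sub_cancel]; exact interior_subset hp)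
      fun h => hpq (by simpa using add_mem h (Submodule.mem_span_singleton_self q))
    refine ⟨_, hv, ?_⟩
    rw [real_inner_eq_neg_norm_of_mem_span_singleton (convex_convexHull ℝ S)
      (mem_interior_iff_mem_nhds.1 h0) hq hw hwq hε hεw]
    exact neg_le_of_abs_le (by simpa [hv.1] using abs_real_inner_le_norm q (α • (p - q) + β • q))
  · obtain ⟨α, hα, β, hβ, hv⟩ := exists_isBoundaryTangentDirection_smul_add_smul hS h0 hq hεw
      (by rwa [Submodule.smul_mem_iff _ hε.ne'])
    rw [smul_smul] at hv
    exact ⟨_, hv, real_inner_le_real_inner_smul_add_smul hw hv.1 (by positivity) hβ⟩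

end InnerProduct

/-- for a convex polyhedron `P` with `0` in its interior, a boundary point
`q`, and any unit vector `w` pointing into `P` at `q`, there is a boundary-tangent
direction `v` of `P` at `q` with `⟪q, v⟫ ≥ ⟪q, w⟫`: the maximum of the one-sided
directional derivative of the radial distance over the tangent cone is attained at a
direction tangent to the boundary. -/
theorem exists_boundary_tangent_direction_ge
    (S : Set (EuclideanSpace ℝ (Fin 3))) (hSfin : S.Finite)
    (P : Set (EuclideanSpace ℝ (Fin 3))) (hP : P = convexHull ℝ S)
    (h0 : (0 : EuclideanSpace ℝ (Fin 3)) ∈ interior P)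
    (q : EuclideanSpace ℝ (Fin 3)) (hq : q ∈ frontier P)
    (w : EuclideanSpace ℝ (Fin 3)) (hw : ‖w‖ = 1)
    (hwin : ∃ ε > (0 : ℝ), ∀ t ∈ Set.Icc (0 : ℝ) ε, q + t • w ∈ P) :
    ∃ v : EuclideanSpace ℝ (Fin 3), ‖v‖ = 1 ∧
      (∃ ε > (0 : ℝ), ∀ t ∈ Set.Icc (0 : ℝ) ε, q + t • v ∈ frontier P) ∧
      ⟪q, w⟫ ≤ ⟪q, v⟫ := by
  subst hP
  obtain ⟨ε, hε, hseg⟩ := hwin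
  have hline : ℝ ∙ q ≠ ⊤ := fun h => by
    have := finrank_span_le_card (R := ℝ) ({q} : Set (EuclideanSpace ℝ (Fin 3)))
    rw [h, finrank_top, finrank_euclideanSpace_fin] at this
    simp at this
  obtain ⟨v, ⟨hv, hvF⟩, hle⟩ := exists_isBoundaryTangentDirection_real_inner_le hSfin h0 hq hline
    hw hε (hseg ε ⟨hε.le, le_rfl⟩)
  exact ⟨v, hv, hvF, hle⟩
end

section
/- Let P ⊆ ℝ³ be a compact convex set with 0 in its interior, let Π be a plane supporting P such that the face F = Π ∩ P has affine dimension 2, and let q be a point of the relative interior of F. If q is an equilibrium point of P, i.e. ⟪x, q⟫ ≤ ‖q‖² for all x ∈ P, then q is the orthogonal projection of 0 onto Π. In particular, the relative interior of each face of a convex polyhedron contains at most one equilibrium point. -/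
/-!
The equilibrium condition says that `q` maximises the linear functional `⟪·, q⟫` on `P`, hence
on the face `F`. Since `q` lies in the relative interior of `F`, the functional vanishes on the
direction of `F`, which by the dimension count is the whole direction of the plane `B`; so
`0 - q` is normal to `B`.
-/

open scoped RealInnerProductSpace Topology

section IntrinsicInterior

variable {E : Type*} [NormedAddCommGroup E] [NormedSpace ℝ E] {s : Set E} {q v : E}

theorem eventually_add_smul_mem_of_mem_intrinsicInterior (hq : q ∈ intrinsicInterior ℝ s)
    (hv : v ∈ (affineSpan ℝ s).direction) : ∀ᶠ t : ℝ in 𝓝 0, q + t • v ∈ s := by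
  obtain ⟨z, hz, rfl⟩ := mem_intrinsicInterior.1 hq
  have hline : ∀ t : ℝ, (z : E) + t • v ∈ affineSpan ℝ s := fun t => by
    simpa [vadd_eq_add, add_comm] using
      AffineSubspace.vadd_mem_of_mem_direction (Submodule.smul_mem _ t hv) z.2
  have hcont : Continuous fun t : ℝ => (⟨z + t • v, hline t⟩ : affineSpan ℝ s) := by
    fun_prop
  have hz0 : (⟨z + (0 : ℝ) • v, hline 0⟩ : affineSpan ℝ s) = z := by ext; simp
  exact hcont.continuousAt.preimage_mem_nhds (hz0 ▸ mem_interior_iff_mem_nhds.1 hz)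

theorem LinearMap.map_eq_zero_of_isMaxOn_of_mem_intrinsicInterior (f : E →ₗ[ℝ] ℝ)
    (hmax : IsMaxOn f s q) (hq : q ∈ intrinsicInterior ℝ s)
    (hv : v ∈ (affineSpan ℝ s).direction) : f v = 0 := by
  have hlocal : IsLocalMax (fun t : ℝ => f (q + t • v)) 0 := by
    filter_upwards [eventually_add_smul_mem_of_mem_intrinsicInterior hq hv] with t ht
    simpa using hmax ht
  have hderiv : HasDerivAt (fun t : ℝ => f (q + t • v)) (f v) 0 := by
    simpa [mul_comm] using ((hasDerivAt_id (0 : ℝ)).mul_const (f v)).const_add (f q)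
  exact hlocal.hasDerivAt_eq_zero hderiv

end IntrinsicInterior

section Hyperplane

variable {E : Type*} [NormedAddCommGroup E] [InnerProductSpace ℝ E] {nv : E} {c : ℝ}

theorem sub_mem_orthogonal_span_singleton {x y : E} (hx : ⟪nv, x⟫ = c) (hy : ⟪nv, y⟫ = c) :
    x - y ∈ (ℝ ∙ nv)ᗮ := by
  rw [Submodule.mem_orthogonal_singleton_iff_inner_right, inner_sub_right, hx, hy, sub_self]

theorem vectorSpan_le_orthogonal_span_singleton {s : Set E} (hs : s ⊆ {x | ⟪nv, x⟫ = c}) :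
    vectorSpan ℝ s ≤ (ℝ ∙ nv)ᗮ := by
  rw [vectorSpan_def, Submodule.span_le]
  rintro _ ⟨x, hx, y, hy, rfl⟩
  exact sub_mem_orthogonal_span_singleton (hs hx) (hs hy)

theorem vectorSpan_eq_orthogonal_span_singleton {n : ℕ} (hE : Module.finrank ℝ E = n + 1)
    (hnv : nv ≠ 0) {s : Set E} (hs : s ⊆ {x | ⟪nv, x⟫ = c})
    (hdim : Module.finrank ℝ (vectorSpan ℝ s) = n) : vectorSpan ℝ s = (ℝ ∙ nv)ᗮ := by
  have : Fact (Module.finrank ℝ E = n + 1) := ⟨hE⟩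
  have : FiniteDimensional ℝ E := .of_fact_finrank_eq_succ n
  exact Submodule.eq_of_le_of_finrank_eq (vectorSpan_le_orthogonal_span_singleton hs)
    (by rw [hdim, Submodule.finrank_orthogonal_span_singleton (n := n) hnv])

end Hyperplane

theorem equilibrium_in_face_is_projection_general
    (P : Set (EuclideanSpace ℝ (Fin 3)))
    (nv : EuclideanSpace ℝ (Fin 3)) (c : ℝ) (hnv : nv ≠ 0)
    (B : Set (EuclideanSpace ℝ (Fin 3))) (hB : B = {x | ⟪nv, x⟫ = c})
    (F : Set (EuclideanSpace ℝ (Fin 3))) (hF : F = B ∩ P)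
    -- `F` has affine dimension `2`
    (hdim : Module.finrank ℝ (vectorSpan ℝ F) = 2)
    (q : EuclideanSpace ℝ (Fin 3)) (hq : q ∈ intrinsicInterior ℝ F)
    -- `q` is an equilibrium point of `P`
    (heq : ∀ x ∈ P, ⟪x, q⟫ ≤ ‖q‖ ^ 2) :
    q ∈ B ∧ ∀ x ∈ B, ⟪(0 : EuclideanSpace ℝ (Fin 3)) - q, x - q⟫ = 0 := by
  subst hB hF
  have hqF : q ∈ {x | ⟪nv, x⟫ = c} ∩ P := intrinsicInterior_subset hq
  have hspan : vectorSpan ℝ ({x | ⟪nv, x⟫ = c} ∩ P) = (ℝ ∙ nv)ᗮ :=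
    vectorSpan_eq_orthogonal_span_singleton finrank_euclideanSpace_fin hnv
      Set.inter_subset_left hdim
  have hmax : IsMaxOn (innerₛₗ ℝ q) ({x | ⟪nv, x⟫ = c} ∩ P) q := fun x hx => by
    simpa [real_inner_comm, real_inner_self_eq_norm_sq] using heq x hx.2
  refine ⟨hqF.1, fun x hx => ?_⟩
  have hxq : x - q ∈ (affineSpan ℝ ({x | ⟪nv, x⟫ = c} ∩ P)).direction := by
    rw [direction_affineSpan, hspan]
    exact sub_mem_orthogonal_span_singleton hx hqF.1
  simpa [inner_neg_left] using
    (innerₛₗ ℝ q).map_eq_zero_of_isMaxOn_of_mem_intrinsicInterior hmax hq hxq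

/-- if `B` is a plane supporting a compact convex body `P ∋ 0` such that the
face `F = B ∩ P` has affine dimension `2`, and `q`, a point of the relative interior of
`F`, is an equilibrium point of `P`, then `q` is the orthogonal projection of `0` onto
`B`. -/
theorem equilibrium_in_face_is_projection
    (P : Set (EuclideanSpace ℝ (Fin 3))) (hPc : IsCompact P) (hPconv : Convex ℝ P)
    (h0 : (0 : EuclideanSpace ℝ (Fin 3)) ∈ interior P)
    (nv : EuclideanSpace ℝ (Fin 3)) (c : ℝ) (hnv : nv ≠ 0)
    (B : Set (EuclideanSpace ℝ (Fin 3))) (hB : B = {x | ⟪nv, x⟫ = c})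
    -- `B` supports `P`
    (hsupp : ∀ x ∈ P, ⟪nv, x⟫ ≤ c)
    (F : Set (EuclideanSpace ℝ (Fin 3))) (hF : F = B ∩ P)
    -- `F` has affine dimension `2`
    (hdim : Module.finrank ℝ (vectorSpan ℝ F) = 2)
    (q : EuclideanSpace ℝ (Fin 3)) (hq : q ∈ intrinsicInterior ℝ F)
    -- `q` is an equilibrium point of `P`
    (heq : ∀ x ∈ P, ⟪x, q⟫ ≤ ‖q‖ ^ 2) :
    q ∈ B ∧ ∀ x ∈ B, ⟪(0 : EuclideanSpace ℝ (Fin 3)) - q, x - q⟫ = 0 :=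
  equilibrium_in_face_is_projection_general P nv c hnv B hB F hF hdim q hq heq
end

section
/- Let P ⊆ ℝ³ be a compact convex set with 0 in its interior, let a ≠ b be points with the segment [a, b] contained in ∂P, and let q lie in the open segment (a, b). If q is an equilibrium point of P, i.e. ⟪x, q⟫ ≤ ‖q‖² for all x ∈ P, then q is the orthogonal projection of 0 onto the line through a and b. In particular, the relative interior of each edge of a convex polyhedron contains at most one equilibrium point. -/
open scoped RealInnerProductSpace

/-- if the segment `[a, b]` (with `a ≠ b`) lies on the boundary of a compact
convex body `P ∋ 0` and a point `q` of the open segment `(a, b)` is an equilibrium point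
of `P`, then `q` is the orthogonal projection of `0` onto the line through `a` and `b`. -/
theorem equilibrium_in_edge_is_projection
    (P : Set (EuclideanSpace ℝ (Fin 3))) (hPc : IsCompact P) (hPconv : Convex ℝ P)
    (h0 : (0 : EuclideanSpace ℝ (Fin 3)) ∈ interior P)
    (a b : EuclideanSpace ℝ (Fin 3)) (hab : a ≠ b)
    (hseg : segment ℝ a b ⊆ frontier P)
    (q : EuclideanSpace ℝ (Fin 3)) (hq : q ∈ openSegment ℝ a b)
    -- `q` is an equilibrium point of `P`
    (heq : ∀ x ∈ P, ⟪x, q⟫ ≤ ‖q‖ ^ 2) :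
    q ∈ (affineSpan ℝ {a, b} : Set (EuclideanSpace ℝ (Fin 3))) ∧
    ∀ x ∈ (affineSpan ℝ {a, b} : Set (EuclideanSpace ℝ (Fin 3))),
      ⟪(0 : EuclideanSpace ℝ (Fin 3)) - q, x - q⟫ = 0 := by
  have hclosed : IsClosed P := hPc.isClosed
  have haP : a ∈ P := hclosed.frontier_subset (hseg (left_mem_segment ℝ a b))
  have hbP : b ∈ P := hclosed.frontier_subset (hseg (right_mem_segment ℝ a b))
  obtain ⟨s, t, hs, ht, hst, hq'⟩ := hq
  have ha := heq a haP
  have hb := heq b hbP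
  have hqq : ⟪q, q⟫ = ‖q‖ ^ 2 := real_inner_self_eq_norm_sq q
  have hcomb : s * ⟪a, q⟫ + t * ⟪b, q⟫ = ‖q‖ ^ 2 := by
    rw [← hqq]
    nth_rewrite 3 [← hq']
    rw [inner_add_left, real_inner_smul_left, real_inner_smul_left]
  have haeq : ⟪a, q⟫ = ‖q‖ ^ 2 := by nlinarith
  have hbeq : ⟪b, q⟫ = ‖q‖ ^ 2 := by nlinarith
  have hdir : ⟪q, b - a⟫ = 0 := by
    rw [real_inner_comm, inner_sub_left]; linarith
  have hqline : q = AffineMap.lineMap a b t := by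
    rw [AffineMap.lineMap_apply_module, ← hq']
    have : s = 1 - t := by linarith
    rw [this]
  constructor
  · rw [hqline]; exact AffineMap.lineMap_mem_affineSpan_pair t a b
  · intro x hx
    have hqmem : q ∈ line[ℝ, a, b] := by
      rw [hqline]; exact AffineMap.lineMap_mem_affineSpan_pair t a b
    have hd : x - q ∈ vectorSpan ℝ ({a, b} : Set (EuclideanSpace ℝ (Fin 3))) := by
      rw [← direction_affineSpan]
      exact AffineSubspace.vsub_mem_direction hx hqmem
    obtain ⟨r, hr⟩ := mem_vectorSpan_pair.mp hd
    have hxq : x - q = r • (a - b) := by rw [← hr]; rfl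
    rw [hxq, inner_smul_right, zero_sub, inner_neg_left]
    have : ⟪q, a - b⟫ = 0 := by rw [real_inner_comm, inner_sub_left]; linarith
    rw [this]; ring
end

section
/- Let o ∈ ℝ³ and let L be a line in ℝ³ with o ∉ L. Let Q be the plane containing L and o, let T be the plane containing L and perpendicular to Q, and let H be a plane containing L with H ≠ T. If x ∈ H lies strictly on the same side of T as o (x and o belong to the same open half-space determined by T), then the orthogonal projection of o onto H lies in the same open half-plane of H determined by L as x. (This lemma converts the supporting-plane condition for a segment of an ascending curve into the statement that the projected reference point and the next segment endpoint lie on the same side of the segment's line.) -/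
open scoped RealInnerProductSpace

private lemma inner_self_pos' {x : EuclideanSpace ℝ (Fin 3)} (hx : x ≠ 0) :
    (0:ℝ) < ⟪x, x⟫ :=
  lt_of_not_ge fun h => hx (real_inner_self_nonpos.mp h)

private lemma expL (m n y : EuclideanSpace ℝ (Fin 3)) (r : ℝ) :
    ⟪m - r • n, y⟫ = ⟪m, y⟫ - r * ⟪n, y⟫ := by
  rw [inner_sub_left, real_inner_smul_left]

private lemma expR (y m n : EuclideanSpace ℝ (Fin 3)) (r : ℝ) :
    ⟪y, m - r • n⟫ = ⟪y, m⟫ - r * ⟪y, n⟫ := by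
  rw [inner_sub_right, real_inner_smul_right]

private lemma exp2L (r s : ℝ) (m n y : EuclideanSpace ℝ (Fin 3)) :
    ⟪r • m - s • n, y⟫ = r * ⟪m, y⟫ - s * ⟪n, y⟫ := by
  rw [inner_sub_left, real_inner_smul_left, real_inner_smul_left]

private lemma exp2R (r s : ℝ) (m n y : EuclideanSpace ℝ (Fin 3)) :
    ⟪y, r • m - s • n⟫ = r * ⟪y, m⟫ - s * ⟪y, n⟫ := by
  rw [inner_sub_right, real_inner_smul_right, real_inner_smul_right]

private lemma expAdd (y m n : EuclideanSpace ℝ (Fin 3)) (r s : ℝ) :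
    ⟪y, r • m + s • n⟫ = r * ⟪y, m⟫ + s * ⟪y, n⟫ := by
  rw [inner_add_right, real_inner_smul_right, real_inner_smul_right]

/-- let `L` be the line through `a ≠ b`, let `o ∉ L`, let `Q` be the plane
through `L` and `o`, let `T` be the plane containing `L` perpendicular to `Q` (its normal
`nT` lies in the direction space `span {b - a, o - a}` of `Q` and is orthogonal to
`b - a`), and let `H ≠ T` be a plane containing `L` (with normal `nH`). If `x ∈ H` lies
strictly on the same side of `T` as `o`, then the orthogonal projection `p` of `o` onto
`H` lies in the same open half-plane of `H` determined by `L` as `x`; equivalently, the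
segment `[x, p]` does not meet `L`. -/
theorem projection_same_side_as_point
    (o a b : EuclideanSpace ℝ (Fin 3)) (hab : a ≠ b)
    (hoL : o ∉ (affineSpan ℝ {a, b} : Set (EuclideanSpace ℝ (Fin 3))))
    (nT nH : EuclideanSpace ℝ (Fin 3)) (hnT0 : nT ≠ 0) (hnH0 : nH ≠ 0)
    (T H : Set (EuclideanSpace ℝ (Fin 3)))
    (hT : T = {y | ⟪nT, y - a⟫ = 0}) (hH : H = {y | ⟪nH, y - a⟫ = 0})
    -- `T` contains `L` and is perpendicular to `Q`
    (hTL : ⟪nT, b - a⟫ = 0)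
    (hTQ : nT ∈ Submodule.span ℝ ({b - a, o - a} : Set (EuclideanSpace ℝ (Fin 3))))
    -- `H` contains `L` and differs from `T`
    (hHL : ⟪nH, b - a⟫ = 0) (hHT : H ≠ T)
    -- `x ∈ H` lies strictly on the same side of `T` as `o`
    (x : EuclideanSpace ℝ (Fin 3)) (hx : x ∈ H)
    (hside : 0 < ⟪nT, x - a⟫ * ⟪nT, o - a⟫)
    -- `p` is the orthogonal projection of `o` onto `H`
    (p : EuclideanSpace ℝ (Fin 3)) (hp : p ∈ H)
    (hperp : ∀ y ∈ H, ⟪o - p, y - p⟫ = 0) :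
    segment ℝ x p ∩ (affineSpan ℝ {a, b} : Set (EuclideanSpace ℝ (Fin 3))) = ∅ := by
  set u : EuclideanSpace ℝ (Fin 3) := b - a with hu
  set v : EuclideanSpace ℝ (Fin 3) := o - a with hv
  have hu0 : u ≠ 0 := sub_ne_zero.mpr (Ne.symm hab)
  have huu : (0:ℝ) < ⟪u, u⟫ := inner_self_pos' hu0
  obtain ⟨α, β, hαβ⟩ := Submodule.mem_span_pair.mp hTQ
  set c : ℝ := ⟪v, u⟫ / ⟪u, u⟫ with hc
  set w : EuclideanSpace ℝ (Fin 3) := v - c • u with hwdef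
  have hwu : ⟪w, u⟫ = 0 := by
    have h := expL v u u c
    rw [← hwdef] at h
    rw [h, hc, div_mul_cancel₀ _ (ne_of_gt huu), sub_self]
  have hnTu : (0:ℝ) = α * ⟪u, u⟫ + β * ⟪v, u⟫ := by
    have h : ⟪nT, u⟫ = 0 := hTL
    rw [← hαβ, inner_add_left, real_inner_smul_left, real_inner_smul_left] at h
    linarith
  have hαA : α * ⟪u, u⟫ = -(β * ⟪v, u⟫) := by linarith
  have hαc : α = -(β * c) := by
    rw [hc, ← mul_div_assoc, ← neg_div, eq_div_iff (ne_of_gt huu)]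
    exact hαA
  have hnTw : nT = β • w := by
    rw [← hαβ, hwdef, hαc]
    module
  have hβ0 : β ≠ 0 := by
    rintro rfl; rw [zero_smul] at hnTw; exact hnT0 hnTw
  have hw0 : w ≠ 0 := by
    intro hw
    apply hoL
    have hv_eq : v = c • u := by
      have h := hwdef ▸ hw; rwa [sub_eq_zero] at h
    have ho : o = c • (b - a) + a := by
      rw [← hu, ← hv_eq, hv]; abel
    have hmem : c • (b -ᵥ a) +ᵥ a ∈ affineSpan ℝ ({a, b} : Set (EuclideanSpace ℝ (Fin 3))) :=
      AffineSubspace.smul_vsub_vadd_mem _ c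
        (right_mem_affineSpan_pair ℝ a b) (left_mem_affineSpan_pair ℝ a b)
        (left_mem_affineSpan_pair ℝ a b)
    rw [ho]
    exact hmem
  have hww : (0:ℝ) < ⟪w, w⟫ := inner_self_pos' hw0
  have hveq : v = w + c • u := by rw [hwdef]; abel
  have hwv : ⟪w, v⟫ = ⟪w, w⟫ := by
    conv_lhs => rw [hveq]
    rw [inner_add_right, real_inner_smul_right, hwu, mul_zero, add_zero]
  have hnHu : ⟪nH, u⟫ = 0 := hHL
  have hnHv : ⟪nH, v⟫ = ⟪nH, w⟫ := by
    conv_lhs => rw [hveq]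
    rw [inner_add_right, real_inner_smul_right, hnHu, mul_zero, add_zero]
  have hnHnH : (0:ℝ) < ⟪nH, nH⟫ := inner_self_pos' hnH0
  have hpH : ⟪nH, p - a⟫ = 0 := by rw [hH] at hp; exact hp
  -- `o - p` is a multiple of `nH`
  set lam : ℝ := ⟪nH, o - p⟫ / ⟪nH, nH⟫ with hlam
  set z : EuclideanSpace ℝ (Fin 3) := o - p - lam • nH with hz
  have hnHz : ⟪nH, z⟫ = 0 := by
    have h := expR nH (o - p) nH lam
    rw [← hz] at h
    rw [h, hlam, div_mul_cancel₀ _ (ne_of_gt hnHnH), sub_self]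
  have hpz : p + z ∈ H := by
    rw [hH]
    show ⟪nH, p + z - a⟫ = 0
    have h : p + z - a = (p - a) + z := by abel
    rw [h, inner_add_right, hpH, hnHz, add_zero]
  have hoz : ⟪o - p, z⟫ = 0 := by
    have h := hperp (p + z) hpz
    rwa [add_sub_cancel_left] at h
  have hzz : ⟪z, z⟫ = 0 := by
    have h := expL (o - p) nH z lam
    rw [← hz] at h
    rw [h, hoz, hnHz, mul_zero, sub_zero]
  have hz0 : z = 0 := by
    by_contra hne
    exact absurd hzz (ne_of_gt (inner_self_pos' hne))
  have hop : o - p = lam • nH := by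
    rw [hz] at hz0
    exact sub_eq_zero.mp hz0
  have hlam_eq : ⟪nH, o - p⟫ = ⟪nH, w⟫ := by
    have h : o - p = v - (p - a) := by rw [hv]; abel
    conv_lhs => rw [h]
    rw [inner_sub_right, hpH, hnHv, sub_zero]
  have hlam2 : lam * ⟪nH, nH⟫ = ⟪nH, w⟫ := by
    rw [hlam, div_mul_cancel₀ _ (ne_of_gt hnHnH), hlam_eq]
  clear_value lam
  -- key quantities
  have fo_eq : ⟪nT, v⟫ = β * ⟪w, w⟫ := by
    rw [hnTw, real_inner_smul_left, hwv]
  have fp_eq : ⟪nT, p - a⟫ = β * ⟪w, w⟫ - lam * (β * ⟪w, nH⟫) := by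
    have h1 : p - a = v - (o - p) := by rw [hv]; abel
    conv_lhs => rw [h1]
    rw [inner_sub_right, fo_eq, hop, real_inner_smul_right, hnTw, real_inner_smul_left]
  -- Cauchy-Schwarz, strict since `H ≠ T`
  have hCS : ⟪nH, w⟫ * ⟪nH, w⟫ < ⟪nH, nH⟫ * ⟪w, w⟫ := by
    rcases lt_or_eq_of_le (real_inner_mul_inner_self_le nH w) with h | h
    · exact h
    exfalso
    set z2 : EuclideanSpace ℝ (Fin 3) := ⟪w, w⟫ • nH - ⟪nH, w⟫ • w with hz2
    have h1 := exp2L ⟪w, w⟫ ⟪nH, w⟫ nH w z2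
    rw [← hz2] at h1
    have h2 := exp2R ⟪w, w⟫ ⟪nH, w⟫ nH w nH
    rw [← hz2] at h2
    have h3 := exp2R ⟪w, w⟫ ⟪nH, w⟫ nH w w
    rw [← hz2] at h3
    have hzz2 : ⟪z2, z2⟫ = 0 := by
      rw [h1, h2, h3, real_inner_comm nH w]
      linear_combination (-⟪w, w⟫) * h
    have hz20 : z2 = 0 := by
      by_contra hne
      exact absurd hzz2 (ne_of_gt (inner_self_pos' hne))
    rw [hz2] at hz20
    have hkey : ⟪w, w⟫ • nH = ⟪nH, w⟫ • w := sub_eq_zero.mp hz20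
    have hs0 : ⟪nH, w⟫ ≠ 0 := by
      intro h0
      rw [h0, zero_smul] at hkey
      exact hnH0 ((smul_eq_zero.mp hkey).resolve_left (ne_of_gt hww))
    apply hHT
    rw [hH, hT]
    ext y
    simp only [Set.mem_setOf_eq]
    have hrel : ⟪w, w⟫ * ⟪nH, y - a⟫ = ⟪nH, w⟫ * ⟪w, y - a⟫ := by
      have h4 : ⟪⟪w, w⟫ • nH, y - a⟫ = ⟪⟪nH, w⟫ • w, y - a⟫ := by rw [hkey]
      rwa [real_inner_smul_left, real_inner_smul_left] at h4
    have hnT_y : ⟪nT, y - a⟫ = β * ⟪w, y - a⟫ := by rw [hnTw, real_inner_smul_left]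
    constructor
    · intro h5
      rw [hnT_y]
      have h6 : ⟪w, w⟫ * ⟪nH, y - a⟫ = 0 := by rw [h5, mul_zero]
      have h7 : ⟪w, y - a⟫ = 0 := by
        rw [h6] at hrel
        exact (mul_eq_zero.mp hrel.symm).resolve_left hs0
      rw [h7, mul_zero]
    · intro h5
      rw [hnT_y] at h5
      have h7 : ⟪w, y - a⟫ = 0 := (mul_eq_zero.mp h5).resolve_left hβ0
      rw [h7, mul_zero] at hrel
      exact (mul_eq_zero.mp hrel).resolve_left (ne_of_gt hww)
  -- the projection is strictly on the same side of `T` as `o`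
  have hβ2 : (0:ℝ) < β * β := mul_self_pos.mpr hβ0
  rw [real_inner_comm nH w] at fp_eq
  have h3 : (0:ℝ) < ⟪w, w⟫ - lam * ⟪nH, w⟫ := by
    have h5 : (⟪w, w⟫ - lam * ⟪nH, w⟫) * ⟪nH, nH⟫ = ⟪nH, nH⟫ * ⟪w, w⟫ - ⟪nH, w⟫ * ⟪nH, w⟫ := by
      linear_combination (-⟪nH, w⟫) * hlam2
    have h6 : 0 < (⟪w, w⟫ - lam * ⟪nH, w⟫) * ⟪nH, nH⟫ := by
      rw [h5]; linarith [hCS]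
    by_contra h7
    push_neg at h7
    have h8 : (⟪w, w⟫ - lam * ⟪nH, w⟫) * ⟪nH, nH⟫ ≤ 0 :=
      mul_nonpos_iff.mpr (Or.inr ⟨h7, hnHnH.le⟩)
    linarith
  have hfpfo : 0 < ⟪nT, p - a⟫ * ⟪nT, v⟫ := by
    rw [fp_eq, fo_eq,
      show (β * ⟪w, w⟫ - lam * (β * ⟪nH, w⟫)) * (β * ⟪w, w⟫)
        = β * β * ⟪w, w⟫ * (⟪w, w⟫ - lam * ⟪nH, w⟫) from by ring]
    exact mul_pos (mul_pos hβ2 hww) h3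
  have hfxfp : 0 < ⟪nT, x - a⟫ * ⟪nT, p - a⟫ := by
    have hfo0 : ⟪nT, v⟫ ≠ 0 := by
      rw [fo_eq]; exact mul_ne_zero hβ0 (ne_of_gt hww)
    have hfo2 : 0 < ⟪nT, v⟫ * ⟪nT, v⟫ := mul_self_pos.mpr hfo0
    by_contra hcon
    push_neg at hcon
    have h9 : ⟪nT, x - a⟫ * ⟪nT, p - a⟫ * (⟪nT, v⟫ * ⟪nT, v⟫) ≤ 0 :=
      mul_nonpos_iff.mpr (Or.inr ⟨hcon, hfo2.le⟩)
    have h10 : ⟪nT, x - a⟫ * ⟪nT, v⟫ * (⟪nT, p - a⟫ * ⟪nT, v⟫)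
        = ⟪nT, x - a⟫ * ⟪nT, p - a⟫ * (⟪nT, v⟫ * ⟪nT, v⟫) := by ring
    linarith [mul_pos hside hfpfo, h9, h10]
  -- conclude
  ext q
  simp only [Set.mem_inter_iff, Set.mem_empty_iff_false, iff_false, not_and]
  intro hqseg hqL
  obtain ⟨s, t, hs, ht, hst, hq⟩ := hqseg
  have hqa : q - a = s • (x - a) + t • (p - a) := by
    have h5 : s • (x - a) + t • (p - a) = s • x + t • p - (s + t) • a := by module
    rw [h5, hst, one_smul, hq]
  have hq0' : s * ⟪nT, x - a⟫ + t * ⟪nT, p - a⟫ = 0 := by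
    have h6 := expAdd nT (x - a) (p - a) s t
    rw [← hqa] at h6
    rw [← h6]
    -- ⟪nT, q - a⟫ = 0 since q ∈ L
    have hq'' : (q - a) +ᵥ a ∈ affineSpan ℝ ({a, b} : Set (EuclideanSpace ℝ (Fin 3))) := by
      have : (q - a) +ᵥ a = q := by
        rw [vadd_eq_add]; abel
      rw [this]; exact hqL
    obtain ⟨r, hr⟩ := (vadd_left_mem_affineSpan_pair (k := ℝ)).mp hq''
    have h7 : q - a = r • u := by rw [← hr]; rfl
    rw [h7, real_inner_smul_right, hTL, mul_zero]
  rcases mul_pos_iff.mp hfxfp with ⟨h1, h2⟩ | ⟨h1, h2⟩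
  · rcases hs.lt_or_eq with hs' | hs'
    · linarith [mul_pos hs' h1, mul_nonneg ht h2.le]
    · have ht1 : t = 1 := by linarith
      rw [← hs', ht1, zero_mul, one_mul, zero_add] at hq0'
      linarith
  · rcases hs.lt_or_eq with hs' | hs'
    · linarith [mul_neg_of_pos_of_neg hs' h1, mul_nonpos_iff.mpr (Or.inl ⟨ht, h2.le⟩)]
    · have ht1 : t = 1 := by linarith
      rw [← hs', ht1, zero_mul, one_mul, zero_add] at hq0'
      linarith
end
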